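/- arXiv:2309.01720 — 10 statements merged into one kernel-verified Lean document; each statement's English description precedes it below -/
import Mathlib

section
/- Let G be a group, (Γ_n) a decreasing sequence of normal finite-index subgroups of G, and (D_n) an increasing sequence of finite subsets of G with 1_G ∈ D_n, each D_n a fundamental domain for G/Γ_n, and D_{n+1} = ⋃_{v ∈ D_{n+1} ∩ Γ_n} v·D_n for all n. Define J(0) = {1_G} and J(n) = D_n \ ⋃_{i=0}^{n-1} J(i)Γ_{i+1}. Then for every n, J(n+1) = ⋃_{γ ∈ (D_{n+1} ∩ Γ_n) \ {1_G}} γ·J(n). -/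
open Pointwise

/-- With `(Γ n)` decreasing normal finite-index subgroups, `(D n)` compatible fundamental domains, and `J n = D n \\ ⋃_{i<n} J i · Γ (i+1)` (with `J 0 = {1}`), one has `J (n+1) = ⋃_{γ ∈ (D (n+1) ∩ Γ n) \\ {1}} γ • J n`. -/
theorem J_succ_eq_union {G : Type*} [Group G]
    (Γ : ℕ → Subgroup G)
    (hnorm : ∀ n, (Γ n).Normal)
    (hfin : ∀ n, (Γ n).FiniteIndex)
    (hdec : ∀ n, Γ (n + 1) ≤ Γ n)
    (D : ℕ → Finset G)
    (hD0 : D 0 = {1})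
    (hDone : ∀ n, (1 : G) ∈ D n)
    (hDmono : ∀ n, D n ⊆ D (n + 1))
    (hfund : ∀ n, ∀ g : G, ∃! d, d ∈ D n ∧ g⁻¹ * d ∈ Γ n)
    (hcompat : ∀ i j, i < j →
      (D j : Set G) = ⋃ v ∈ (D j : Set G) ∩ (Γ i : Set G), v • (D i : Set G))
    (J : ℕ → Set G)
    (hJ : ∀ n, J n = (D n : Set G) \ ⋃ i ∈ Finset.range n, J i * (Γ (i + 1) : Set G))
    :
    ∀ n : ℕ, J (n + 1) = ⋃ γ ∈ (((D (n + 1) : Set G) ∩ (Γ n : Set G)) \ {1}), γ • J n := by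
  have hchain : ∀ i n : ℕ, i ≤ n → Γ n ≤ Γ i := by
    intro i n h
    induction n with
    | zero => obtain rfl := Nat.le_zero.mp h; exact le_rfl
    | succ m ih =>
      rcases Nat.eq_or_lt_of_le h with rfl | h'
      · exact le_rfl
      · exact (hdec m).trans (ih (Nat.lt_succ_iff.mp h'))
  have hJsub : ∀ n, J n ⊆ (D n : Set G) := fun n => by
    rw [hJ n]; exact Set.diff_subset
  intro n
  ext x
  constructor
  · intro hx
    have hx' := hx
    rw [hJ (n+1)] at hx'
    obtain ⟨hxD, hxU⟩ := hx'
    rw [hcompat n (n+1) (Nat.lt_succ_self n)] at hxD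
    rw [Set.mem_iUnion₂] at hxD
    obtain ⟨γ, hγ, hxmem⟩ := hxD
    obtain ⟨d, hd, rfl⟩ := hxmem
    have hγΓ : γ ∈ Γ n := hγ.2
    -- γ ≠ 1
    have hγne : γ ≠ 1 := by
      rintro rfl
      simp only [one_smul] at hxU hd ⊢
      apply hxU
      rw [Set.mem_iUnion₂]
      by_cases hdJ : d ∈ J n
      · exact ⟨n, Finset.self_mem_range_succ n, d, hdJ, 1, (Γ (n+1)).one_mem, mul_one d⟩
      · rw [hJ n] at hdJ
        have : d ∈ ⋃ i ∈ Finset.range n, J i * (Γ (i + 1) : Set G) := by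
          by_contra hc
          exact hdJ ⟨hd, hc⟩
        rw [Set.mem_iUnion₂] at this
        obtain ⟨i, hi, hmem⟩ := this
        exact ⟨i, Finset.mem_range.mpr (Nat.lt_succ_of_lt (Finset.mem_range.mp hi)), hmem⟩
    -- d ∈ J n
    have hdJ : d ∈ J n := by
      rw [hJ n]
      refine ⟨hd, ?_⟩
      intro hc
      rw [Set.mem_iUnion₂] at hc
      obtain ⟨i, hi, z, hz, δ, hδ, hzd⟩ := hc
      have hi' : i < n := Finset.mem_range.mp hi
      apply hxU
      rw [Set.mem_iUnion₂]
      refine ⟨i, Finset.mem_range.mpr (Nat.lt_succ_of_lt hi'), z, hz,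
        (z⁻¹ * γ * z) * δ, ?_, ?_⟩
      · have hγi : γ ∈ Γ (i+1) := hchain (i+1) n hi' hγΓ
        exact mul_mem (by
          have := (hnorm (i+1)).conj_mem γ hγi z⁻¹
          simpa using this) hδ
      · have : z * δ = d := hzd
        calc z * (z⁻¹ * γ * z * δ) = γ * (z * δ) := by group
        _ = γ * d := by rw [this]
        _ = γ • d := rfl
    exact Set.mem_iUnion₂.mpr ⟨γ, ⟨hγ, by simpa using hγne⟩, d, hdJ, rfl⟩
  · intro hx
    rw [Set.mem_iUnion₂] at hx
    obtain ⟨γ, ⟨hγ, hγne⟩, y, hy, rfl⟩ := hx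
    have hγne : γ ≠ 1 := by simpa using hγne
    have hγΓ : γ ∈ Γ n := hγ.2
    have hyD : y ∈ (D n : Set G) := hJsub n hy
    rw [hJ (n+1)]
    constructor
    · rw [hcompat n (n+1) (Nat.lt_succ_self n)]
      exact Set.mem_iUnion₂.mpr ⟨γ, hγ, y, hyD, rfl⟩
    · intro hc
      rw [Set.mem_iUnion₂] at hc
      obtain ⟨i, hi, z, hz, δ, hδ, hzd⟩ := hc
      have hi' : i < n + 1 := Finset.mem_range.mp hi
      rcases Nat.lt_succ_iff_lt_or_eq.mp hi' with hilt | heq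
      · -- i < n : y ∈ J i * Γ (i+1), contradicting y ∈ J n
        have hyJ := hy
        rw [hJ n] at hyJ
        apply hyJ.2
        rw [Set.mem_iUnion₂]
        refine ⟨i, Finset.mem_range.mpr hilt, z, hz, (z⁻¹ * γ⁻¹ * z) * δ, ?_, ?_⟩
        · have hγi : γ⁻¹ ∈ Γ (i+1) := inv_mem (hchain (i+1) n hilt hγΓ)
          exact mul_mem (by
            have := (hnorm (i+1)).conj_mem γ⁻¹ hγi z⁻¹
            simpa using this) hδ
        · have hzd' : z * δ = γ • y := hzd
          calc z * (z⁻¹ * γ⁻¹ * z * δ) = γ⁻¹ * (z * δ) := by group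
          _ = γ⁻¹ * (γ * y) := by rw [hzd']; rfl
          _ = y := by group
      · -- i = n : derive z = y, then γ ∈ Γ (n+1), then γ = 1
        rw [heq] at hz hδ
        have hzD : z ∈ (D n : Set G) := hJsub n hz
        have hzd' : z * δ = γ * y := hzd
        have hyz : y⁻¹ * z ∈ Γ n := by
          have h1 : y⁻¹ * γ * y ∈ Γ n := by
            have := (hnorm n).conj_mem γ hγΓ y⁻¹
            simpa using this
          have h2 : δ⁻¹ ∈ Γ n := hdec n (inv_mem hδ)
          have : y⁻¹ * z = (y⁻¹ * γ * y) * δ⁻¹ := by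
            have : z = γ * y * δ⁻¹ := by
              rw [← hzd']; group
            rw [this]; group
          rw [this]; exact mul_mem h1 h2
        obtain ⟨d₀, _, hduniq⟩ := hfund n y
        have hzy : z = y := by
          have e1 : z = d₀ := hduniq z ⟨hzD, hyz⟩
          have e2 : y = d₀ := hduniq y ⟨hyD, by simpa using (Γ n).one_mem⟩
          rw [e1, e2]
        -- γ = y * δ * y⁻¹ ∈ Γ (n+1)
        have hγmem : γ ∈ Γ (n+1) := by
          have h3 : γ = z * δ * y⁻¹ := by
            rw [hzd']; group
          rw [hzy] at h3
          rw [h3]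
          exact (hnorm (n+1)).conj_mem δ hδ y
        obtain ⟨d₁, _, hd₁⟩ := hfund (n+1) γ
        apply hγne
        have e1 : γ = d₁ := hd₁ γ ⟨hγ.1, by simpa using (Γ (n+1)).one_mem⟩
        have e2 : (1 : G) = d₁ := hd₁ 1 ⟨hDone (n+1), by simpa using inv_mem hγmem⟩
        rw [e1, ← e2]
end

section
/- Let η ∈ Σ^G be a Toeplitz array with period structure (Γ_n). Then J(n) ⊆ Per(η, Γ_{n+1}) \ Per(η, Γ_n) for every n ∈ ℕ if and only if Per(η, Γ_n) = ⋃_{i=0}^{n-1} J(i)Γ_{i+1} for every n ∈ ℕ. -/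
open Pointwise

/-- `Per(η, Γ, α)`: positions `g` such that `η` equals `α` on the whole coset `Γ g`. -/
def PerA {G A : Type*} [Group G] (η : G → A) (Γ : Subgroup G) (α : A) : Set G :=
  {g | ∀ γ ∈ Γ, η (γ * g) = α}

/-- `Per(η, Γ) = ⋃_α Per(η, Γ, α)`: positions at which `η` is `Γ`-periodic. -/
def Per {G A : Type*} [Group G] (η : G → A) (Γ : Subgroup G) : Set G :=
  ⋃ α, PerA η Γ α

/-- `Γ` is an essential group of periods of `η`: whenever
`Per(η,Γ,α) ⊆ Per(σ^g η, Γ, α)` for all symbols `α`, we must have `g ∈ Γ`. -/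
def IsEssential {G A : Type*} [Group G] (η : G → A) (Γ : Subgroup G) : Prop :=
  ∀ g : G, (∀ α, PerA η Γ α ⊆ PerA (fun h => η (g⁻¹ * h)) Γ α) → g ∈ Γ

/-- `Per` is antitone in the subgroup. -/
lemma per_mono {G A : Type*} [Group G] (η : G → A) {Γ Γ' : Subgroup G} (h : Γ' ≤ Γ) :
    Per η Γ ⊆ Per η Γ' := by
  intro g hg
  obtain ⟨α, hα⟩ := Set.mem_iUnion.mp hg
  exact Set.mem_iUnion.mpr ⟨α, fun γ hγ => hα γ (h hγ)⟩

/-- For a normal subgroup, `Per η Γ` is invariant under right multiplication by `Γ`. -/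
lemma per_mul_right {G A : Type*} [Group G] (η : G → A) {Γ : Subgroup G} (hN : Γ.Normal)
    {g γ₀ : G} (hg : g ∈ Per η Γ) (hγ : γ₀ ∈ Γ) : g * γ₀ ∈ Per η Γ := by
  obtain ⟨α, hα⟩ := Set.mem_iUnion.mp hg
  refine Set.mem_iUnion.mpr ⟨α, fun γ hγ' => ?_⟩
  have h1 : γ * (g * γ₀) = (γ * (g * γ₀ * g⁻¹)) * g := by group
  rw [h1]
  exact hα _ (Γ.mul_mem hγ' (hN.conj_mem γ₀ hγ g))

/-- For a Toeplitz array `η` with period structure `(Γ n)`: `J n ⊆ Per(η,Γ (n+1)) \\ Per(η,Γ n)` for every `n` iff `Per(η,Γ n) = ⋃_{i<n} J i · Γ (i+1)` for every `n`. -/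
theorem J_in_PerDiff_iff_Per_eq_union {G A : Type*} [Group G] [Fintype A] (hA : 2 ≤ Fintype.card A)
    (Γ : ℕ → Subgroup G)
    (hnorm : ∀ n, (Γ n).Normal)
    (hfin : ∀ n, (Γ n).FiniteIndex)
    (hdec : ∀ n, Γ (n + 1) ≤ Γ n)
    (D : ℕ → Finset G)
    (hD0 : D 0 = {1})
    (hDone : ∀ n, (1 : G) ∈ D n)
    (hDmono : ∀ n, D n ⊆ D (n + 1))
    (hfund : ∀ n, ∀ g : G, ∃! d, d ∈ D n ∧ g⁻¹ * d ∈ Γ n)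
    (hcompat : ∀ i j, i < j →
      (D j : Set G) = ⋃ v ∈ (D j : Set G) ∩ (Γ i : Set G), v • (D i : Set G))
    (J : ℕ → Set G)
    (hJ : ∀ n, J n = (D n : Set G) \ ⋃ i ∈ Finset.range n, J i * (Γ (i + 1) : Set G))
    (η : G → A)
    (hToe : ∀ g : G, ∃ n, g ∈ Per η (Γ n))
    (hess : ∀ n, IsEssential η (Γ n))
    :
    (∀ n : ℕ, J n ⊆ Per η (Γ (n + 1)) \ Per η (Γ n)) ↔
      (∀ n : ℕ, Per η (Γ n) = ⋃ i ∈ Finset.range n, J i * (Γ (i + 1) : Set G)) := by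
  have hanti : Antitone Γ := antitone_nat_of_succ_le hdec
  set U : ℕ → Set G := fun n => ⋃ i ∈ Finset.range n, J i * (Γ (i + 1) : Set G) with hU
  -- every g is either in U n, or of the form d γ with d ∈ J n, γ ∈ Γ n
  have hdecomp : ∀ n (g : G), g ∈ U n ∨ ∃ d ∈ J n, d⁻¹ * g ∈ Γ n := by
    intro n g
    obtain ⟨d, ⟨hdD, hdγ⟩, -⟩ := hfund n g
    have hdg : d⁻¹ * g ∈ Γ n := by
      have := (Γ n).inv_mem hdγ
      simpa using this
    by_cases hd : d ∈ U n
    · left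
      simp only [hU, Set.mem_iUnion] at hd ⊢
      obtain ⟨i, hi, hdi⟩ := hd
      obtain ⟨e, he, δ, hδ, hed⟩ := hdi
      refine ⟨i, hi, e, he, δ * (d⁻¹ * g), (Γ (i + 1)).mul_mem hδ ?_, ?_⟩
      · exact hanti (Nat.succ_le_of_lt (Finset.mem_range.mp hi)) hdg
      · show e * (δ * (d⁻¹ * g)) = g
        rw [← mul_assoc, show e * δ = d from hed]
        group
    · right
      refine ⟨d, ?_, hdg⟩
      rw [hJ n]
      exact ⟨hdD, hd⟩
  constructor
  · -- forward direction
    intro h n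
    apply Set.eq_of_subset_of_subset
    · intro g hg
      rcases hdecomp n g with hgu | ⟨d, hdJ, hdg⟩
      · exact hgu
      · exfalso
        have hdPer : d ∈ Per η (Γ n) := by
          have : g * (d⁻¹ * g)⁻¹ ∈ Per η (Γ n) :=
            per_mul_right η (hnorm n) hg ((Γ n).inv_mem hdg)
          simpa [mul_assoc] using this
        exact (h n hdJ).2 hdPer
    · intro g hg
      simp only [hU, Set.mem_iUnion] at hg
      obtain ⟨i, hi, e, he, δ, hδ, heg⟩ := hg
      have h1 : e ∈ Per η (Γ (i + 1)) := (h i he).1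
      have h2 : e * δ ∈ Per η (Γ (i + 1)) := per_mul_right η (hnorm (i + 1)) h1 hδ
      rw [show e * δ = g from heg] at h2
      exact per_mono η (hanti (Nat.succ_le_of_lt (Finset.mem_range.mp hi))) h2
  · -- backward direction
    intro h n
    intro g hg
    constructor
    · rw [h (n + 1)]
      exact Set.mem_iUnion.mpr ⟨n, Set.mem_iUnion.mpr
        ⟨Finset.mem_range.mpr (Nat.lt_succ_self n), ⟨g, hg, 1, (Γ (n + 1)).one_mem, mul_one g⟩⟩⟩
    · rw [hJ n] at hg
      rw [h n]
      exact hg.2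
end

section
/- Let η be a Toeplitz array with period structure (Γ_n) satisfying J(n) ⊆ Per(η,Γ_{n+1}) \ Per(η,Γ_n) for all n, and let d_n = |D_n ∩ Per(η,Γ_n)| / |D_n|. Then for each n ∈ ℕ, 1 - d_{n+1} = (1 - 1/|D_1|) · ∏_{j=1}^{n} (1 - |D_j|/|D_{j+1}|). -/
/-!
Write `U n = ⋃_{i<n} J(i) Γ_{i+1}`. Since `J(n)` is `D_n \ U n` and consists of non-`Γ_n`-periodic
positions, while `U n` is `Γ_n`-periodic, the periodic part of `D_n` is exactly `D_n ∩ U n`.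
Both `U n` and `D_{n+1} = ⋃_{v ∈ D_{n+1} ∩ Γ_n} v D_n` are built from `Γ_n`-cosets, so passing
from `D_n` to `D_{n+1}` multiplies the old periodic count by `k = |D_{n+1}|/|D_n|` and adds the
`|J(n)| = |D_n|(1 - d_n)` positions of the new layer `J(n) Γ_{n+1}`. This gives
`d_{n+1} = d_n + (|D_n|/|D_{n+1}|)(1 - d_n)`, i.e. `1 - d_{n+1} = (1 - d_n)(1 - |D_n|/|D_{n+1}|)`,
and the formula follows by telescoping from `d_0 = 0`.
-/

open Pointwise

section Periodicity

variable {G A : Type*} [Group G] (η : G → A)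

lemma Per_subset_Per_of_le {Γ Γ' : Subgroup G} (h : Γ' ≤ Γ) : Per η Γ ⊆ Per η Γ' := by
  simp only [Per, PerA, Set.iUnion_subset_iff]
  exact fun α g hg => Set.mem_iUnion.2 ⟨α, fun γ hγ => hg γ (h hγ)⟩

lemma mul_mem_Per {Γ : Subgroup G} [Γ.Normal] {g δ : G} (hg : g ∈ Per η Γ) (hδ : δ ∈ Γ) :
    g * δ ∈ Per η Γ := by
  obtain ⟨α, hα⟩ := Set.mem_iUnion.1 hg
  refine Set.mem_iUnion.2 ⟨α, fun γ hγ => ?_⟩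
  simpa [mul_assoc] using hα (γ * (g * δ * g⁻¹)) (Γ.mul_mem hγ (‹Γ.Normal›.conj_mem δ hδ g))

end Periodicity

def IsCosetReps {G : Type*} [Group G] (H : Subgroup G) (D : Set G) : Prop :=
  ∀ g : G, ∃! d, d ∈ D ∧ g⁻¹ * d ∈ H

namespace IsCosetReps

variable {G : Type*} [Group G] {H : Subgroup G} {D : Set G}

lemma eq_of_inv_mul_mem (hD : IsCosetReps H D) {y z : G} (hy : y ∈ D) (hz : z ∈ D)
    (hyz : y⁻¹ * z ∈ H) : y = z :=
  (hD y).unique ⟨hy, by simp⟩ ⟨hz, hyz⟩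

lemma nonempty (hD : IsCosetReps H D) : D.Nonempty :=
  let ⟨d, ⟨hd, _⟩, _⟩ := hD 1
  ⟨d, hd⟩

lemma ncard_inter_eq_mul [H.Normal] (hD : IsCosetReps H D) {E S : Set G}
    (hE : E = ⋃ v ∈ E ∩ H, v • D) (hS : ∀ δ ∈ H, ∀ g ∈ S, δ * g ∈ S) :
    (E ∩ S).ncard = (E ∩ H).ncard * (D ∩ S).ncard := by
  have hprod : E ∩ S = (fun p : G × G => p.1 * p.2) '' ((E ∩ H) ×ˢ (D ∩ S)) := by
    ext x
    constructor
    · rintro ⟨hxE, hxS⟩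
      have hx := hxE
      rw [hE] at hx
      simp only [Set.mem_iUnion] at hx
      obtain ⟨v, hv, y, hy, rfl⟩ := hx
      refine ⟨(v, y), ⟨hv, hy, ?_⟩, rfl⟩
      simpa using hS v⁻¹ (H.inv_mem hv.2) (v • y) hxS
    · rintro ⟨⟨v, y⟩, ⟨hv, hy, hyS⟩, rfl⟩
      refine ⟨?_, hS v hv.2 y hyS⟩
      rw [hE]
      exact Set.mem_biUnion hv (Set.smul_mem_smul_set hy)
  have hinj : Set.InjOn (fun p : G × G => p.1 * p.2) ((E ∩ H) ×ˢ (D ∩ S)) := by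
    rintro ⟨v, y⟩ ⟨⟨-, hv⟩, hy, -⟩ ⟨w, z⟩ ⟨⟨-, hw⟩, hz, -⟩ (hvywz : v * y = w * z)
    have hyz : y = z := hD.eq_of_inv_mul_mem hy hz <| by
      rw [show z = w⁻¹ * v * y by rw [mul_assoc, hvywz, inv_mul_cancel_left]]
      simpa [mul_assoc] using ‹H.Normal›.conj_mem _ (H.mul_mem (H.inv_mem hw) hv) y⁻¹
    subst hyz
    rw [mul_right_cancel hvywz]
  rw [hprod, hinj.ncard_image, Set.ncard_prod]

lemma ncard_inter_mul_of_le {H' : Subgroup G} (hH' : H' ≤ H) (hD : IsCosetReps H D)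
    {E X : Set G} (hE : IsCosetReps H' E) (hX : X ⊆ D) :
    (E ∩ (X * (H' : Set G))).ncard = X.ncard := by
  refine (Set.ncard_congr (fun x _ => (hE x).exists.choose) (fun x hx => ?_) ?_ ?_).symm
  · obtain ⟨hrE, hrH⟩ := (hE x).exists.choose_spec
    exact ⟨hrE, x, hx, _, hrH, mul_inv_cancel_left _ _⟩
  · intro x y hx hy hxy
    obtain ⟨-, hxr⟩ := (hE x).exists.choose_spec
    obtain ⟨-, hyr⟩ := (hE y).exists.choose_spec
    refine hD.eq_of_inv_mul_mem (hX hx) (hX hy) (hH' ?_)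
    rw [← hxy] at hyr
    simpa [mul_assoc] using H'.mul_mem hxr (H'.inv_mem hyr)
  · rintro _ ⟨he, x, hx, γ, hγ, rfl⟩
    exact ⟨x, hx, (hE x).unique (hE x).exists.choose_spec ⟨he, by simpa using hγ⟩⟩

end IsCosetReps

def periodicCover {G : Type*} [Group G] (Γ : ℕ → Subgroup G) (J : ℕ → Set G) (n : ℕ) : Set G :=
  ⋃ i ∈ Finset.range n, J i * (Γ (i + 1) : Set G)

namespace periodicCover

variable {G : Type*} [Group G] {Γ : ℕ → Subgroup G} {J : ℕ → Set G}

@[simp]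
lemma zero : periodicCover Γ J 0 = ∅ := by
  simp [periodicCover]

lemma succ (n : ℕ) :
    periodicCover Γ J (n + 1) = periodicCover Γ J n ∪ J n * (Γ (n + 1) : Set G) := by
  rw [periodicCover, Finset.range_add_one, Finset.set_biUnion_insert, Set.union_comm]
  rfl

lemma mul_mem (hΓ : Antitone Γ) {n : ℕ} {g δ : G} (hg : g ∈ periodicCover Γ J n)
    (hδ : δ ∈ Γ n) : g * δ ∈ periodicCover Γ J n := by
  simp only [periodicCover, Set.mem_iUnion, Finset.mem_range] at hg ⊢
  obtain ⟨i, hi, j, hj, γ, hγ, rfl⟩ := hg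
  exact ⟨i, hi, j, hj, γ * δ, (Γ (i + 1)).mul_mem hγ (hΓ hi hδ), (mul_assoc _ _ _).symm⟩

lemma mul_mem_left (hΓ : Antitone Γ) [∀ n, (Γ n).Normal] {n : ℕ} {g δ : G}
    (hg : g ∈ periodicCover Γ J n) (hδ : δ ∈ Γ n) : δ * g ∈ periodicCover Γ J n := by
  simpa [mul_assoc] using mul_mem hΓ hg ((inferInstance : (Γ n).Normal).conj_mem δ hδ g⁻¹)

lemma disjoint_mul (hΓ : Antitone Γ) {n : ℕ} (hJ : Disjoint (J n) (periodicCover Γ J n)) :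
    Disjoint (periodicCover Γ J n) (J n * (Γ (n + 1) : Set G)) := by
  rw [Set.disjoint_left]
  rintro _ hx ⟨j, hj, γ, hγ, rfl⟩
  refine Set.disjoint_left.1 hJ hj ?_
  simpa using mul_mem hΓ hx (hΓ n.le_succ ((Γ (n + 1)).inv_mem hγ))

lemma subset_Per {A : Type*} {η : G → A} (hΓ : Antitone Γ) [∀ n, (Γ n).Normal]
    (hJ : ∀ i, J i ⊆ Per η (Γ (i + 1))) (n : ℕ) : periodicCover Γ J n ⊆ Per η (Γ n) := by
  simp only [periodicCover, Set.iUnion_subset_iff, Finset.mem_range]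
  rintro i hi _ ⟨j, hj, γ, hγ, rfl⟩
  exact Per_subset_Per_of_le η (hΓ hi) (mul_mem_Per η (hJ i hj) hγ)

end periodicCover

section Density

variable {G : Type*} [Group G] {Γ : ℕ → Subgroup G} {J : ℕ → Set G}

lemma inter_Per_eq_inter_periodicCover {A : Type*} {η : G → A} (hΓ : Antitone Γ)
    [∀ n, (Γ n).Normal] {D : Set G} {n : ℕ} (hJn : J n = D \ periodicCover Γ J n)
    (hJper : ∀ i, J i ⊆ Per η (Γ (i + 1)) \ Per η (Γ i)) :
    D ∩ Per η (Γ n) = D ∩ periodicCover Γ J n := by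
  refine Set.Subset.antisymm (fun g ⟨hgD, hgP⟩ => ⟨hgD, ?_⟩)
    (Set.inter_subset_inter_right D
      (periodicCover.subset_Per hΓ (fun i => (hJper i).trans Set.sdiff_subset) n))
  by_contra hg
  exact (hJper n (hJn ▸ ⟨hgD, hg⟩)).2 hgP

lemma ncard_inter_periodicCover_succ (hΓ : Antitone Γ) [∀ n, (Γ n).Normal] {n : ℕ}
    {D E : Finset G} (hD : IsCosetReps (Γ n) D) (hE : IsCosetReps (Γ (n + 1)) E)
    (hDE : (E : Set G) = ⋃ v ∈ (E : Set G) ∩ Γ n, v • (D : Set G))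
    (hJn : J n = (D : Set G) \ periodicCover Γ J n) :
    ((E : Set G) ∩ periodicCover Γ J (n + 1)).ncard =
      ((E : Set G) ∩ Γ n).ncard * ((D : Set G) ∩ periodicCover Γ J n).ncard + (J n).ncard := by
  have hJD : J n ⊆ D := hJn ▸ Set.sdiff_subset
  have hdisj : Disjoint (J n) (periodicCover Γ J n) := hJn ▸ Set.disjoint_sdiff_left
  rw [periodicCover.succ, Set.inter_union_distrib_left, Set.ncard_union_eq
    ((periodicCover.disjoint_mul hΓ hdisj).mono Set.inter_subset_right Set.inter_subset_right),
    hD.ncard_inter_eq_mul hDE (fun δ hδ g hg => periodicCover.mul_mem_left hΓ hg hδ),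
    hD.ncard_inter_mul_of_le (hΓ n.le_succ) hE hJD]

lemma one_sub_density_succ (hΓ : Antitone Γ) [∀ n, (Γ n).Normal] {n : ℕ}
    {D E : Finset G} (hD : IsCosetReps (Γ n) D) (hE : IsCosetReps (Γ (n + 1)) E)
    (hDE : (E : Set G) = ⋃ v ∈ (E : Set G) ∩ Γ n, v • (D : Set G))
    (hJn : J n = (D : Set G) \ periodicCover Γ J n) :
    1 - (((E : Set G) ∩ periodicCover Γ J (n + 1)).ncard : ℝ) / E.card =
      (1 - (((D : Set G) ∩ periodicCover Γ J n).ncard : ℝ) / D.card) *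
        (1 - (D.card : ℝ) / E.card) := by
  have hcard : E.card = ((E : Set G) ∩ Γ n).ncard * D.card := by
    simpa using hD.ncard_inter_eq_mul hDE (S := Set.univ) (fun _ _ _ _ => trivial)
  have hJcard : (J n).ncard + ((D : Set G) ∩ periodicCover Γ J n).ncard = D.card := by
    rw [hJn, add_comm, Set.ncard_inter_add_ncard_sdiff_eq_ncard _ _ D.finite_toSet,
      Set.ncard_coe_finset]
  have hEpos : (E.card : ℝ) ≠ 0 := by exact_mod_cast (Finset.card_pos.2 hE.nonempty).ne'
  rw [hcard, ← hJcard] at hEpos ⊢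
  rw [ncard_inter_periodicCover_succ hΓ hD hE hDE hJn]
  push_cast at hEpos ⊢
  have hk := left_ne_zero_of_mul hEpos
  have hN := right_ne_zero_of_mul hEpos
  field_simp
  ring

end Density

theorem density_product_formula_general {G A : Type*} [Group G]
    (Γ : ℕ → Subgroup G)
    (hnorm : ∀ n, (Γ n).Normal)
    (hdec : ∀ n, Γ (n + 1) ≤ Γ n)
    (D : ℕ → Finset G)
    (hD0 : D 0 = {1})
    (hfund : ∀ n, ∀ g : G, ∃! d, d ∈ D n ∧ g⁻¹ * d ∈ Γ n)
    (hcompat : ∀ i j, i < j →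
      (D j : Set G) = ⋃ v ∈ (D j : Set G) ∩ (Γ i : Set G), v • (D i : Set G))
    (J : ℕ → Set G)
    (hJ : ∀ n, J n = (D n : Set G) \ ⋃ i ∈ Finset.range n, J i * (Γ (i + 1) : Set G))
    (η : G → A)
    (hJper : ∀ n : ℕ, J n ⊆ Per η (Γ (n + 1)) \ Per η (Γ n))
    (d : ℕ → ℝ)
    (hd : ∀ n, d n = (Nat.card ((D n : Set G) ∩ Per η (Γ n) : Set G) : ℝ) / ((D n).card : ℝ))
    :
    ∀ n : ℕ, 1 - d (n + 1) =
      (1 - 1 / ((D 1).card : ℝ)) * ∏ j ∈ Finset.Icc 1 n, (1 - ((D j).card : ℝ) / ((D (j + 1)).card : ℝ)) := by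
  have hΓ : Antitone Γ := antitone_nat_of_succ_le hdec
  have hd_cover : ∀ n, d n = (((D n : Set G) ∩ periodicCover Γ J n).ncard : ℝ) / (D n).card :=
    fun n => by rw [hd, Nat.card_coe_set_eq, inter_Per_eq_inter_periodicCover hΓ (hJ n) hJper]
  have hstep : ∀ n, 1 - d (n + 1) = (1 - d n) * (1 - ((D n).card : ℝ) / (D (n + 1)).card) :=
    fun n => by
      rw [hd_cover, hd_cover]
      exact one_sub_density_succ hΓ (hfund n) (hfund (n + 1)) (hcompat n (n + 1) n.lt_succ_self)
        (hJ n)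
  have hd0 : d 0 = 0 := by simp [hd_cover]
  intro n
  induction n with
  | zero => simp [hstep 0, hd0, hD0]
  | succ n ih =>
    rw [Finset.prod_Icc_succ_top (Nat.le_add_left 1 n), ← mul_assoc, ← ih, hstep]

/-- If `J n ⊆ Per(η,Γ (n+1)) \\ Per(η,Γ n)` for all `n`, then with `d_n = |D n ∩ Per(η,Γ n)| / |D n|`, one has `1 - d (n+1) = (1 - 1/|D 1|) ∏_{j=1}^{n} (1 - |D j|/|D (j+1)|)`. -/
theorem density_product_formula {G A : Type*} [Group G] [Fintype A] (hA : 2 ≤ Fintype.card A)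
    (Γ : ℕ → Subgroup G)
    (hnorm : ∀ n, (Γ n).Normal)
    (hfin : ∀ n, (Γ n).FiniteIndex)
    (hdec : ∀ n, Γ (n + 1) ≤ Γ n)
    (D : ℕ → Finset G)
    (hD0 : D 0 = {1})
    (hDone : ∀ n, (1 : G) ∈ D n)
    (hDmono : ∀ n, D n ⊆ D (n + 1))
    (hfund : ∀ n, ∀ g : G, ∃! d, d ∈ D n ∧ g⁻¹ * d ∈ Γ n)
    (hcompat : ∀ i j, i < j →
      (D j : Set G) = ⋃ v ∈ (D j : Set G) ∩ (Γ i : Set G), v • (D i : Set G))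
    (J : ℕ → Set G)
    (hJ : ∀ n, J n = (D n : Set G) \ ⋃ i ∈ Finset.range n, J i * (Γ (i + 1) : Set G))
    (η : G → A)
    (hToe : ∀ g : G, ∃ n, g ∈ Per η (Γ n))
    (hess : ∀ n, IsEssential η (Γ n))
    (hJper : ∀ n : ℕ, J n ⊆ Per η (Γ (n + 1)) \ Per η (Γ n))
    (d : ℕ → ℝ)
    (hd : ∀ n, d n = (Nat.card ((D n : Set G) ∩ Per η (Γ n) : Set G) : ℝ) / ((D n).card : ℝ))
    :
    ∀ n : ℕ, 1 - d (n + 1) =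
      (1 - 1 / ((D 1).card : ℝ)) * ∏ j ∈ Finset.Icc 1 n, (1 - ((D j).card : ℝ) / ((D (j + 1)).card : ℝ)) :=
  density_product_formula_general Γ hnorm hdec D hD0 hfund hcompat J hJ η hJper d hd
end

section
/- Let η be a Toeplitz array with period structure (Γ_n) satisfying J(n) ⊆ Per(η,Γ_{n+1}) \ Per(η,Γ_n) for all n. Then d_{n+1} = d_n + (|D_n|/|D_{n+1}|)(1 - d_n) for every n, where d_n = |D_n ∩ Per(η,Γ_n)|/|D_n|; in particular (d_n) is nondecreasing. -/
open Pointwise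

/-!
Let `filled J Γ n = ⋃_{i<n} J(i) Γ_{i+1}` be the set of positions filled before stage `n`, and
`p_n = |D_n ∩ filled J Γ n|`. Since `J(i) ⊆ Per(η, Γ_{i+1})`, which is a union of `Γ_{i+1}`-cosets
and lies in `Per(η, Γ_n)` for `i < n`, `filled J Γ n ⊆ Per(η, Γ_n)`; as
`J(n) = D_n \ filled J Γ n` misses `Per(η, Γ_n)`, `d_n = p_n / |D_n|`.

`D_{n+1}` is tiled by the `c_n` translates `v D_n`, `v ∈ D_{n+1} ∩ Γ_n`, so it meets every union of
`Γ_n`-cosets, in particular `filled J Γ n`, `c_n` times as often as `D_n` does. At stage `n + 1`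
the new part `J(n) Γ_{n+1}` meets the transversal `D_{n+1}` exactly in `J(n)`, which has
`|D_n| - p_n` elements. Hence `p_{n+1} = c_n p_n + |D_n| - p_n` and `|D_{n+1}| = c_n |D_n|`, which
is the recursion.
-/

open Finset Subgroup

section

variable {G A : Type*} [Group G]

section Transversal

variable {Γ : Subgroup G}

theorem Subgroup.isComplement_of_existsUnique {D : Set G}
    (h : ∀ g : G, ∃! d, d ∈ D ∧ g⁻¹ * d ∈ Γ) : IsComplement D Γ := by
  refine isComplement_iff_existsUnique_inv_mul_mem.2 fun g => ?_
  obtain ⟨d, ⟨hd, hgd⟩, hu⟩ := h g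
  refine ⟨⟨d, hd⟩, by simpa using Γ.inv_mem hgd, fun s hs => Subtype.ext (hu s ⟨s.2, ?_⟩)⟩
  simpa using Γ.inv_mem hs

theorem Subgroup.IsComplement.eq_of_inv_mul_mem {D : Set G} (hD : IsComplement D Γ) {x y : G}
    (hx : x ∈ D) (hy : y ∈ D) (h : x⁻¹ * y ∈ Γ) : x = y := by
  have := @hD.1 (⟨x, hx⟩, ⟨x⁻¹ * y, h⟩) (⟨y, hy⟩, 1) (by simp)
  simpa using congrArg (fun p => (p.1 : G)) this

theorem Subgroup.IsComplement.injOn_mul_of_normal {D : Set G} (hD : IsComplement D Γ)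
    (hN : Γ.Normal) : ((Γ : Set G) ×ˢ D).InjOn fun p => p.1 * p.2 := by
  rintro ⟨v, x⟩ ⟨hv, hx⟩ ⟨w, y⟩ ⟨hw, hy⟩ (h : v * x = w * y)
  have hxy : x = y := by
    refine hD.eq_of_inv_mul_mem hx hy ?_
    have hy' : y = w⁻¹ * v * x := by rw [mul_assoc, h, inv_mul_cancel_left]
    simpa [hy', mul_assoc] using hN.conj_mem _ (Γ.mul_mem (Γ.inv_mem hw) hv) x⁻¹
  subst hxy
  simp [mul_right_cancel h]

theorem Subgroup.IsComplement.inter_mul_eq {D T : Set G} (hD : IsComplement D Γ) (hT : T ⊆ D) :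
    D ∩ (T * Γ) = T := by
  refine subset_antisymm ?_ fun x hx => ⟨hT hx, x, hx, 1, Γ.one_mem, mul_one x⟩
  rintro _ ⟨hxD, x, hx, γ, hγ, rfl⟩
  rwa [← hD.eq_of_inv_mul_mem (hT hx) hxD (by simpa using hγ)]

variable [DecidableEq G] {D D' : Finset G}

theorem filter_eq_mul_of_tiling
    (htile : (D' : Set G) = ⋃ v ∈ (D' : Set G) ∩ Γ, v • (D : Set G))
    {S : Set G} [DecidablePred (· ∈ S)] [DecidablePred (· ∈ Γ)]
    (hS : ∀ v ∈ Γ, ∀ x ∈ S, v * x ∈ S) :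
    {x ∈ D' | x ∈ S} = {v ∈ D' | v ∈ Γ} * {x ∈ D | x ∈ S} := by
  replace hS (v : G) (hv : v ∈ Γ) (x : G) : v * x ∈ S ↔ x ∈ S :=
    ⟨fun h => by simpa using hS v⁻¹ (Γ.inv_mem hv) _ h, hS v hv x⟩
  ext x
  have hx := congrArg (x ∈ ·) htile
  simp only [mem_coe, Set.mem_iUnion, Set.mem_inter_iff, Set.mem_smul_set, smul_eq_mul,
    exists_prop] at hx
  simp only [mem_filter, mem_mul, hx]
  constructor
  · rintro ⟨⟨v, ⟨hv, hvΓ⟩, y, hy, rfl⟩, hvy⟩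
    exact ⟨v, ⟨hv, hvΓ⟩, y, ⟨hy, (hS v hvΓ y).1 hvy⟩, rfl⟩
  · rintro ⟨v, ⟨hv, hvΓ⟩, y, ⟨hy, hyS⟩, rfl⟩
    exact ⟨⟨v, ⟨hv, hvΓ⟩, y, hy, rfl⟩, (hS v hvΓ y).2 hyS⟩

theorem card_filter_eq_mul_of_tiling (hD : IsComplement (D : Set G) Γ) (hN : Γ.Normal)
    (htile : (D' : Set G) = ⋃ v ∈ (D' : Set G) ∩ Γ, v • (D : Set G))
    {S : Set G} [DecidablePred (· ∈ S)] [DecidablePred (· ∈ Γ)]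
    (hS : ∀ v ∈ Γ, ∀ x ∈ S, v * x ∈ S) :
    #{x ∈ D' | x ∈ S} = #{v ∈ D' | v ∈ Γ} * #{x ∈ D | x ∈ S} := by
  rw [filter_eq_mul_of_tiling htile hS, card_mul_iff]
  refine (hD.injOn_mul_of_normal hN).mono (Set.prod_mono ?_ ?_) <;> intro x <;> simp_all

end Transversal

theorem antitone_per (η : G → A) : Antitone (Per η) := by
  intro Γ Γ' h g hg
  obtain ⟨α, hα⟩ := Set.mem_iUnion.1 hg
  exact Set.mem_iUnion.2 ⟨α, fun γ hγ => hα γ (h hγ)⟩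

theorem mul_mem_per {η : G → A} {Γ : Subgroup G} (hN : Γ.Normal) {g γ : G} (hg : g ∈ Per η Γ)
    (hγ : γ ∈ Γ) : g * γ ∈ Per η Γ := by
  obtain ⟨α, hα⟩ := Set.mem_iUnion.1 hg
  refine Set.mem_iUnion.2 ⟨α, fun δ hδ => ?_⟩
  simpa [mul_assoc] using hα _ (Γ.mul_mem hδ (hN.conj_mem γ hγ g))

namespace Toeplitz

def filled (J : ℕ → Set G) (Γ : ℕ → Subgroup G) (n : ℕ) : Set G :=
  ⋃ i ∈ Finset.range n, J i * (Γ (i + 1) : Set G)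

variable {Γ : ℕ → Subgroup G} {J : ℕ → Set G} {n : ℕ}

theorem filled_succ (J : ℕ → Set G) (Γ : ℕ → Subgroup G) (n : ℕ) :
    filled J Γ (n + 1) = filled J Γ n ∪ J n * Γ (n + 1) := by
  rw [filled, range_add_one, set_biUnion_insert, Set.union_comm, filled]

theorem mem_filled {x : G} :
    x ∈ filled J Γ n ↔ ∃ i < n, ∃ j ∈ J i, ∃ γ ∈ Γ (i + 1), j * γ = x := by
  simp [filled, Set.mem_mul]

theorem mul_mem_filled (hΓ : Antitone Γ) {x γ : G} (hx : x ∈ filled J Γ n) (hγ : γ ∈ Γ n) :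
    x * γ ∈ filled J Γ n := by
  obtain ⟨i, hi, j, hj, δ, hδ, rfl⟩ := mem_filled.1 hx
  exact mem_filled.2 ⟨i, hi, j, hj, δ * γ, mul_mem hδ (hΓ hi hγ), (mul_assoc _ _ _).symm⟩

theorem mul_mem_filled_left (hΓ : Antitone Γ) (hN : (Γ n).Normal) {x γ : G}
    (hx : x ∈ filled J Γ n) (hγ : γ ∈ Γ n) : γ * x ∈ filled J Γ n := by
  simpa [mul_assoc] using mul_mem_filled hΓ hx (hN.conj_mem' γ hγ x)

theorem filled_subset_per {η : G → A} (hΓ : Antitone Γ) (hN : ∀ n, (Γ n).Normal)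
    (hJ : ∀ i, J i ⊆ Per η (Γ (i + 1))) : filled J Γ n ⊆ Per η (Γ n) := by
  intro x hx
  obtain ⟨i, hi, j, hj, γ, hγ, rfl⟩ := mem_filled.1 hx
  exact antitone_per η (hΓ hi) (mul_mem_per (hN _) (hJ i hj) hγ)

theorem mem_per_iff_mem_filled {η : G → A} {D : Set G} (hfilled : filled J Γ n ⊆ Per η (Γ n))
    (hJ : J n = D \ filled J Γ n) (hJper : Disjoint (J n) (Per η (Γ n))) {x : G} (hx : x ∈ D) :
    x ∈ Per η (Γ n) ↔ x ∈ filled J Γ n := by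
  refine ⟨fun h => ?_, fun h => hfilled h⟩
  by_contra h'
  exact hJper.notMem_of_mem_left (hJ ▸ ⟨hx, h'⟩ : x ∈ J n) h

theorem natCard_inter_per_eq_card_filter_filled {η : G → A} {D : Finset G}
    [DecidablePred (· ∈ filled J Γ n)] (hfilled : filled J Γ n ⊆ Per η (Γ n))
    (hJ : J n = (D : Set G) \ filled J Γ n) (hJper : Disjoint (J n) (Per η (Γ n))) :
    Nat.card ((D : Set G) ∩ Per η (Γ n) : Set G) = #{x ∈ D | x ∈ filled J Γ n} := by
  classical
  rw [← filter_congr fun x hx => mem_per_iff_mem_filled hfilled hJ hJper (mem_coe.2 hx),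
    ← Set.ncard_coe_finset, coe_filter, Nat.card_coe_set_eq]
  rfl

theorem card_filter_filled_succ_add [DecidableEq G] (hΓ : Antitone Γ) {D D' : Finset G}
    (hD' : IsComplement (D' : Set G) (Γ (n + 1))) (hDD' : D ⊆ D')
    (hJ : J n = (D : Set G) \ filled J Γ n)
    [DecidablePred (· ∈ filled J Γ n)] [DecidablePred (· ∈ filled J Γ (n + 1))] :
    #{x ∈ D' | x ∈ filled J Γ (n + 1)} + #{x ∈ D | x ∈ filled J Γ n} =
      #{x ∈ D' | x ∈ filled J Γ n} + #D := by
  classical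
  have hdisj : Disjoint (filled J Γ n) (J n * Γ (n + 1)) := by
    rw [Set.disjoint_right]
    rintro _ ⟨j, hj, γ, hγ, rfl⟩ h
    rw [hJ] at hj
    exact hj.2 (by simpa using mul_mem_filled hΓ h (inv_mem (hΓ n.le_succ hγ)))
  have hsplit : #{x ∈ D' | x ∈ filled J Γ (n + 1)} =
      #{x ∈ D' | x ∈ filled J Γ n} + #{x ∈ D' | x ∈ J n * Γ (n + 1)} := by
    rw [← card_union_of_disjoint (disjoint_filter.2 fun _ _ h => hdisj.notMem_of_mem_left h),
      ← filter_or]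
    simp [filled_succ]
  have hnew : {x ∈ D' | x ∈ J n * Γ (n + 1)} = {x ∈ D | x ∉ filled J Γ n} := by
    apply coe_injective
    calc (({x ∈ D' | x ∈ J n * Γ (n + 1)} : Finset G) : Set G)
        = (D' : Set G) ∩ (J n * Γ (n + 1)) := by ext; simp
      _ = J n := hD'.inter_mul_eq (hJ ▸ Set.sdiff_subset.trans (coe_subset.2 hDD'))
      _ = (D : Set G) \ filled J Γ n := hJ
      _ = (({x ∈ D | x ∉ filled J Γ n} : Finset G) : Set G) := by ext; simp
  rw [hsplit, hnew, ← card_filter_add_card_filter_not (s := D) (· ∈ filled J Γ n)]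
  ring

end Toeplitz

end

theorem cast_div_mul_eq_of_add_eq {a c p q : ℕ} (ha : 0 < a) (hca : 0 < c * a)
    (h : q + p = c * p + a) : (q : ℝ) / ↑(c * a) = p / a + a / ↑(c * a) * (1 - p / a) := by
  have hc : (0 : ℝ) < c := by exact_mod_cast pos_of_mul_pos_left hca ha.le
  have ha' : (0 : ℝ) < a := by exact_mod_cast ha
  have h' : (q : ℝ) + p = c * p + a := by exact_mod_cast h
  push_cast
  field_simp
  linear_combination h'

open Toeplitz in
theorem density_recursion_general {G A : Type*} [Group G]
    (Γ : ℕ → Subgroup G)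
    (hnorm : ∀ n, (Γ n).Normal)
    (hdec : ∀ n, Γ (n + 1) ≤ Γ n)
    (D : ℕ → Finset G)
    (hDmono : ∀ n, D n ⊆ D (n + 1))
    (hfund : ∀ n, ∀ g : G, ∃! d, d ∈ D n ∧ g⁻¹ * d ∈ Γ n)
    (hcompat : ∀ i j, i < j →
      (D j : Set G) = ⋃ v ∈ (D j : Set G) ∩ (Γ i : Set G), v • (D i : Set G))
    (J : ℕ → Set G)
    (hJ : ∀ n, J n = (D n : Set G) \ ⋃ i ∈ Finset.range n, J i * (Γ (i + 1) : Set G))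
    (η : G → A)
    (hJper : ∀ n : ℕ, J n ⊆ Per η (Γ (n + 1)) \ Per η (Γ n))
    (d : ℕ → ℝ)
    (hd : ∀ n, d n = (Nat.card ((D n : Set G) ∩ Per η (Γ n) : Set G) : ℝ) / ((D n).card : ℝ))
    :
    (∀ n : ℕ, d (n + 1) = d n + ((D n).card : ℝ) / ((D (n + 1)).card : ℝ) * (1 - d n)) ∧
      Monotone d := by
  classical
  have hΓ : Antitone Γ := antitone_nat_of_succ_le hdec
  have hD (n : ℕ) : IsComplement (D n : Set G) (Γ n) := isComplement_of_existsUnique (hfund n)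
  have hJ' (n : ℕ) : J n = (D n : Set G) \ filled J Γ n := hJ n
  have hdp (n : ℕ) : d n = #{x ∈ D n | x ∈ filled J Γ n} / #(D n) := by
    rw [hd, natCard_inter_per_eq_card_filter_filled
      (filled_subset_per hΓ hnorm fun i => (hJper i).trans Set.sdiff_subset) (hJ' n)
      (Set.disjoint_left.2 fun _ hx => (hJper n hx).2)]
  have hcard (n : ℕ) : #(D (n + 1)) = #{v ∈ D (n + 1) | v ∈ Γ n} * #(D n) := by
    simpa using card_filter_eq_mul_of_tiling (S := Set.univ) (hD n) (hnorm n)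
      (hcompat n (n + 1) n.lt_succ_self) (by simp)
  have hrec (n : ℕ) : #{x ∈ D (n + 1) | x ∈ filled J Γ (n + 1)} + #{x ∈ D n | x ∈ filled J Γ n} =
      #{v ∈ D (n + 1) | v ∈ Γ n} * #{x ∈ D n | x ∈ filled J Γ n} + #(D n) := by
    rw [card_filter_filled_succ_add hΓ (hD (n + 1)) (hDmono n) (hJ' n),
      card_filter_eq_mul_of_tiling (hD n) (hnorm n) (hcompat n (n + 1) n.lt_succ_self)
        fun v hv x hx => mul_mem_filled_left hΓ (hnorm n) hx hv]
  have hDpos (n : ℕ) : 0 < #(D n) := card_pos.2 (coe_nonempty.1 (hD n).nonempty_left)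
  have hstep (n : ℕ) : d (n + 1) = d n + #(D n) / #(D (n + 1)) * (1 - d n) := by
    rw [hdp, hdp, hcard]
    exact cast_div_mul_eq_of_add_eq (hDpos n) (hcard n ▸ hDpos (n + 1)) (hrec n)
  have hdle (n : ℕ) : d n ≤ 1 := by
    rw [hdp, div_le_one (by exact_mod_cast hDpos n)]
    exact_mod_cast card_filter_le _ _
  refine ⟨hstep, monotone_nat_of_le_succ fun n => ?_⟩
  rw [hstep n]
  exact le_add_of_nonneg_right (mul_nonneg (div_nonneg (Nat.cast_nonneg _) (Nat.cast_nonneg _))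
    (sub_nonneg.2 (hdle n)))

/-- If `J n ⊆ Per(η,Γ (n+1)) \\ Per(η,Γ n)` for all `n`, then `d (n+1) = d n + (|D n|/|D (n+1)|)(1 - d n)`, and `(d n)` is nondecreasing. -/
theorem density_recursion {G A : Type*} [Group G] [Fintype A] (hA : 2 ≤ Fintype.card A)
    (Γ : ℕ → Subgroup G)
    (hnorm : ∀ n, (Γ n).Normal)
    (hfin : ∀ n, (Γ n).FiniteIndex)
    (hdec : ∀ n, Γ (n + 1) ≤ Γ n)
    (D : ℕ → Finset G)
    (hD0 : D 0 = {1})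
    (hDone : ∀ n, (1 : G) ∈ D n)
    (hDmono : ∀ n, D n ⊆ D (n + 1))
    (hfund : ∀ n, ∀ g : G, ∃! d, d ∈ D n ∧ g⁻¹ * d ∈ Γ n)
    (hcompat : ∀ i j, i < j →
      (D j : Set G) = ⋃ v ∈ (D j : Set G) ∩ (Γ i : Set G), v • (D i : Set G))
    (J : ℕ → Set G)
    (hJ : ∀ n, J n = (D n : Set G) \ ⋃ i ∈ Finset.range n, J i * (Γ (i + 1) : Set G))
    (η : G → A)
    (hToe : ∀ g : G, ∃ n, g ∈ Per η (Γ n))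
    (hess : ∀ n, IsEssential η (Γ n))
    (hJper : ∀ n : ℕ, J n ⊆ Per η (Γ (n + 1)) \ Per η (Γ n))
    (d : ℕ → ℝ)
    (hd : ∀ n, d n = (Nat.card ((D n : Set G) ∩ Per η (Γ n) : Set G) : ℝ) / ((D n).card : ℝ))
    :
    (∀ n : ℕ, d (n + 1) = d n + ((D n).card : ℝ) / ((D (n + 1)).card : ℝ) * (1 - d n)) ∧
      Monotone d :=
  density_recursion_general Γ hnorm hdec D hDmono hfund hcompat J hJ η hJper d hd
end

section
/- Under the setup of the decomposition lemma, if γ ∈ (Γ_{n+1} ∩ D_m) \ (D_{n+1}Γ_{n+2} ∪ ⋯ ∪ D_{m-1}Γ_m) for some m ≥ n+2, then γD_{n+1} ⊆ D_m \ (D_{n+1}Γ_{n+2} ∪ ⋯ ∪ D_{m-1}Γ_m). -/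
open Pointwise

/-- If `γ ∈ (Γ (n+1) ∩ D m) \\ (D (n+1)·Γ (n+2) ∪ ⋯ ∪ D (m-1)·Γ m)` with `m ≥ n+2`, then `γ • D (n+1) ⊆ D m \\ (D (n+1)·Γ (n+2) ∪ ⋯ ∪ D (m-1)·Γ m)`. -/
theorem good_translate_shifts_domain {G : Type*} [Group G]
    (Γ : ℕ → Subgroup G)
    (hnorm : ∀ n, (Γ n).Normal)
    (hfin : ∀ n, (Γ n).FiniteIndex)
    (hdec : ∀ n, Γ (n + 1) ≤ Γ n)
    (D : ℕ → Finset G)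
    (hD0 : D 0 = {1})
    (hDone : ∀ n, (1 : G) ∈ D n)
    (hDmono : ∀ n, D n ⊆ D (n + 1))
    (hfund : ∀ n, ∀ g : G, ∃! d, d ∈ D n ∧ g⁻¹ * d ∈ Γ n)
    (hcompat : ∀ i j, i < j →
      (D j : Set G) = ⋃ v ∈ (D j : Set G) ∩ (Γ i : Set G), v • (D i : Set G))
    :
    ∀ n m : ℕ, n + 2 ≤ m →
      ∀ γ ∈ ((Γ (n + 1) : Set G) ∩ (D m : Set G)) \
          ⋃ i ∈ Finset.Icc (n + 1) (m - 1), (D i : Set G) * (Γ (i + 1) : Set G),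
        γ • (D (n + 1) : Set G) ⊆
          (D m : Set G) \ ⋃ i ∈ Finset.Icc (n + 1) (m - 1), (D i : Set G) * (Γ (i + 1) : Set G) := by
  intro n m hm γ hγ
  obtain ⟨⟨hγΓ, hγD⟩, hγnot⟩ := hγ
  have hΓle : ∀ i j : ℕ, i ≤ j → Γ j ≤ Γ i := by
    intro i j h
    induction j with
    | zero =>
      have : i = 0 := Nat.le_zero.mp h
      simp [this]
    | succ j ih =>
      rcases Nat.lt_or_ge i (j + 1) with h' | h'
      · exact (hdec j).trans (ih (Nat.lt_succ_iff.mp h'))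
      · have : i = j + 1 := le_antisymm h h'
        simp [this]
  intro x hx
  obtain ⟨d, hd, rfl⟩ := hx
  constructor
  · have hc := hcompat (n + 1) m (by omega)
    have hsub : γ • (D (n + 1) : Set G) ⊆ (D m : Set G) := by
      rw [hc]
      exact Set.subset_biUnion_of_mem (u := fun v => v • (D (n + 1) : Set G)) ⟨hγD, hγΓ⟩
    exact hsub ⟨d, hd, rfl⟩
  · intro hmem
    apply hγnot
    simp only [Set.mem_iUnion] at hmem ⊢
    obtain ⟨j, hj, hj2⟩ := hmem
    refine ⟨j, hj, ?_⟩
    have hjn : n + 1 ≤ j := (Finset.mem_Icc.mp hj).1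
    rw [Set.mem_mul] at hj2
    obtain ⟨v, hv, s, hs, heq⟩ := hj2
    simp only [smul_eq_mul] at heq
    -- decompose v = w * d' with w ∈ D j ∩ Γ (n+1), d' ∈ D (n+1)
    obtain ⟨w, hwD, hwΓ, d', hd', hvwd⟩ :
        ∃ w, w ∈ (D j : Set G) ∧ w ∈ (Γ (n + 1) : Set G) ∧
          ∃ d', d' ∈ (D (n + 1) : Set G) ∧ v = w * d' := by
      rcases eq_or_lt_of_le hjn with h | h
      · exact ⟨1, by simpa using hDone j, one_mem _, v, by rwa [← h] at hv, (one_mul v).symm⟩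
      · have hc := hcompat (n + 1) j h
        have := hc ▸ hv
        simp only [Set.mem_iUnion] at this
        obtain ⟨w, hw, hvw⟩ := this
        obtain ⟨d', hd', hvd'⟩ := hvw
        exact ⟨w, hw.1, hw.2, d', hd', hvd'.symm⟩
    -- show d' = d using uniqueness in D (n+1)
    have hdd' : d⁻¹ * d' ∈ Γ (n + 1) := by
      have hd'eq : d' = w⁻¹ * (γ * d) * s⁻¹ := by
        have h : γ * d = w * d' * s := by rw [← hvwd, heq]
        rw [h]; group
      have hconj : d⁻¹ * (w⁻¹ * γ) * d ∈ Γ (n + 1) := by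
        have hwγ : w⁻¹ * γ ∈ Γ (n + 1) := mul_mem (inv_mem hwΓ) hγΓ
        simpa using (hnorm (n + 1)).conj_mem _ hwγ d⁻¹
      have hs' : s⁻¹ ∈ Γ (n + 1) := inv_mem (hΓle (n + 1) (j + 1) (by omega) hs)
      have : d⁻¹ * d' = (d⁻¹ * (w⁻¹ * γ) * d) * s⁻¹ := by rw [hd'eq]; group
      rw [this]
      exact mul_mem hconj hs'
    obtain ⟨e, he, hu⟩ := hfund (n + 1) d
    have h1 : d' = e := hu d' ⟨hd', hdd'⟩
    have h2 : d = e := hu d ⟨hd, by rw [inv_mul_cancel]; exact one_mem _⟩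
    have hdd : d' = d := h1.trans h2.symm
    -- conclude γ ∈ D j * Γ (j+1)
    rw [Set.mem_mul]
    refine ⟨w, hwD, d * s * d⁻¹, ?_, ?_⟩
    · simpa [mul_assoc] using (hnorm (j + 1)).conj_mem s hs d
    · have key : γ * d = w * d * s := by rw [← heq, hvwd, hdd]
      have hγeq : γ = (γ * d) * d⁻¹ := by group
      rw [hγeq, key]; group
end

section
/- Under the setup of the decomposition lemma with J(n) defined as before, for every i ≥ 1 and every γ ∈ Γ_i, there exists l ≥ i such that γJ(i) ⊆ J(l)Γ_{l+1}. -/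
/-!
Write `γ ∈ Γ i` as `γ = γ' v` with `v ∈ D (i+1) ∩ Γ i` and `γ' ∈ Γ (i+1)`. If `v = 1`, then
`γ J(i) ⊆ J(i) Γ(i+1)` by normality. Otherwise `v J(i) ⊆ J(i+1)`, and we continue with `γ'` at
level `i+1`. The process stops: for `x ∈ J(i)` the point `γ x` lies in some `D N`, and a nontrivial
element of `Γ N` cannot map a point of `D N` into `D N`.
-/

open Pointwise

section Transversal

variable {G : Type*} [Group G] {N : Subgroup G}

theorem Subgroup.Normal.smul_set_subset_mul (hN : N.Normal) {g : G} (hg : g ∈ N) (s : Set G) :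
    g • s ⊆ s * N := by
  rintro _ ⟨x, hx, rfl⟩
  exact ⟨x, hx, x⁻¹ * g * x, hN.conj_mem' g hg x, by simp [mul_assoc]⟩

theorem Subgroup.Normal.smul_mul_subset (hN : N.Normal) {g : G} (hg : g ∈ N) (s : Set G) :
    g • (s * N) ⊆ s * N :=
  calc g • (s * N) ⊆ s * N * N := hN.smul_set_subset_mul hg _
    _ = s * N := by rw [mul_assoc, coe_mul_coe]

variable {D : Set G}

theorem eq_of_inv_mul_mem_of_existsUnique (hD : ∀ g : G, ∃! d, d ∈ D ∧ g⁻¹ * d ∈ N)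
    {x y : G} (hx : x ∈ D) (hy : y ∈ D) (hxy : x⁻¹ * y ∈ N) : x = y :=
  (hD x).unique ⟨hx, by simp⟩ ⟨hy, hxy⟩

theorem eq_one_of_mul_mem_of_existsUnique (hN : N.Normal)
    (hD : ∀ g : G, ∃! d, d ∈ D ∧ g⁻¹ * d ∈ N) {g x : G} (hg : g ∈ N) (hx : x ∈ D)
    (hgx : g * x ∈ D) : g = 1 := by
  have hconj : x⁻¹ * (g * x) ∈ N := by simpa [mul_assoc] using hN.conj_mem' g hg x
  exact mul_eq_right.mp (eq_of_inv_mul_mem_of_existsUnique hD hx hgx hconj).symm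

end Transversal

section Decomposition

variable {G : Type*} [Group G] {Γ : ℕ → Subgroup G} {D : ℕ → Finset G} {J : ℕ → Set G}

theorem J_subset_D
    (hJ : ∀ n, J n = (D n : Set G) \ ⋃ i ∈ Finset.range n, J i * (Γ (i + 1) : Set G)) (n : ℕ) :
    J n ⊆ D n := by
  rw [hJ n]
  exact Set.sdiff_subset

theorem mul_notMem_J_mul_of_lt (hnorm : ∀ n, (Γ n).Normal) (hdec : ∀ n, Γ (n + 1) ≤ Γ n)
    (hJ : ∀ n, J n = (D n : Set G) \ ⋃ i ∈ Finset.range n, J i * (Γ (i + 1) : Set G))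
    {m i : ℕ} (hmi : m < i) {v x : G} (hv : v ∈ Γ i) (hx : x ∈ J i) :
    v * x ∉ J m * (Γ (m + 1) : Set G) := by
  intro hvx
  have hv' : v⁻¹ ∈ Γ (m + 1) := inv_mem (antitone_nat_of_succ_le hdec hmi hv)
  have hxm : x ∈ J m * (Γ (m + 1) : Set G) :=
    (hnorm _).smul_mul_subset hv' _ ⟨v * x, hvx, by simp [smul_eq_mul]⟩
  rw [hJ i] at hx
  exact hx.2 (Set.mem_biUnion (Finset.mem_range.mpr hmi) hxm)

theorem mul_notMem_J_mul_self (hnorm : ∀ n, (Γ n).Normal) (hDmono : ∀ n, D n ⊆ D (n + 1))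
    (hfund : ∀ n, ∀ g : G, ∃! d, d ∈ D n ∧ g⁻¹ * d ∈ Γ n)
    (hJ : ∀ n, J n = (D n : Set G) \ ⋃ i ∈ Finset.range n, J i * (Γ (i + 1) : Set G))
    {i : ℕ} {v x : G} (hvΓ : v ∈ Γ i) (hv1 : v ≠ 1) (hx : x ∈ J i)
    (hvx : v * x ∈ D (i + 1)) : v * x ∉ J i * (Γ (i + 1) : Set G) := by
  rintro ⟨y, hy, z, hz, hyz⟩
  have hyvx : y = v * x := by
    refine (eq_of_inv_mul_mem_of_existsUnique (hfund (i + 1)) hvx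
      (hDmono i (J_subset_D hJ i hy)) ?_).symm
    simpa [← hyz, mul_assoc] using inv_mem hz
  have hvxD : v * x ∈ D i := J_subset_D hJ i (hyvx ▸ hy)
  exact hv1 (eq_one_of_mul_mem_of_existsUnique (hnorm i) (hfund i) hvΓ (J_subset_D hJ i hx) hvxD)

theorem mul_mem_J_succ (hnorm : ∀ n, (Γ n).Normal) (hdec : ∀ n, Γ (n + 1) ≤ Γ n)
    (hDmono : ∀ n, D n ⊆ D (n + 1)) (hfund : ∀ n, ∀ g : G, ∃! d, d ∈ D n ∧ g⁻¹ * d ∈ Γ n)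
    (hcompat : ∀ i j, i < j →
      (D j : Set G) = ⋃ v ∈ (D j : Set G) ∩ (Γ i : Set G), v • (D i : Set G))
    (hJ : ∀ n, J n = (D n : Set G) \ ⋃ i ∈ Finset.range n, J i * (Γ (i + 1) : Set G))
    {i : ℕ} {v x : G} (hvD : v ∈ D (i + 1)) (hvΓ : v ∈ Γ i) (hv1 : v ≠ 1) (hx : x ∈ J i) :
    v * x ∈ J (i + 1) := by
  have hvx : v * x ∈ (D (i + 1) : Set G) := by
    rw [hcompat i (i + 1) i.lt_succ_self]
    exact Set.mem_biUnion ⟨hvD, hvΓ⟩ (Set.smul_mem_smul_set (J_subset_D hJ i hx))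
  rw [hJ (i + 1)]
  refine ⟨hvx, ?_⟩
  simp only [Set.mem_iUnion, Finset.mem_range, Nat.lt_succ_iff, not_exists]
  intro m hm
  obtain hmi | rfl := hm.lt_or_eq
  · exact mul_notMem_J_mul_of_lt hnorm hdec hJ hmi hvΓ hx
  · exact mul_notMem_J_mul_self hnorm hDmono hfund hJ hvΓ hv1 hx hvx

theorem exists_mem_D_succ_of_notMem (hnorm : ∀ n, (Γ n).Normal) (hdec : ∀ n, Γ (n + 1) ≤ Γ n)
    (hfund : ∀ n, ∀ g : G, ∃! d, d ∈ D n ∧ g⁻¹ * d ∈ Γ n)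
    {i : ℕ} {γ : G} (hγ : γ ∈ Γ i) (hγ' : γ ∉ Γ (i + 1)) :
    ∃ v ∈ D (i + 1), v ∈ Γ i ∧ v ≠ 1 ∧ γ * v⁻¹ ∈ Γ (i + 1) := by
  obtain ⟨v, ⟨hvD, hγv⟩, -⟩ := hfund (i + 1) γ
  refine ⟨v, hvD, ?_, ?_, ?_⟩
  · simpa using mul_mem hγ (hdec i hγv)
  · rintro rfl
    exact hγ' (by simpa using inv_mem hγv)
  · exact (hnorm _).mem_comm (by simpa using inv_mem hγv)

theorem exists_smul_J_subset_J_mul (hnorm : ∀ n, (Γ n).Normal) (hdec : ∀ n, Γ (n + 1) ≤ Γ n)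
    (hDmono : ∀ n, D n ⊆ D (n + 1)) (hfund : ∀ n, ∀ g : G, ∃! d, d ∈ D n ∧ g⁻¹ * d ∈ Γ n)
    (hcompat : ∀ i j, i < j →
      (D j : Set G) = ⋃ v ∈ (D j : Set G) ∩ (Γ i : Set G), v • (D i : Set G))
    (hJ : ∀ n, J n = (D n : Set G) \ ⋃ i ∈ Finset.range n, J i * (Γ (i + 1) : Set G))
    (k i : ℕ) {γ x : G} (hγ : γ ∈ Γ i) (hx : x ∈ J i) (hγx : γ * x ∈ D (i + k)) :
    ∃ l, i ≤ l ∧ γ • J i ⊆ J l * (Γ (l + 1) : Set G) := by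
  induction k generalizing i γ x with
  | zero =>
    refine ⟨i, le_rfl, (hnorm _).smul_set_subset_mul ?_ _⟩
    rw [eq_one_of_mul_mem_of_existsUnique (hnorm i) (hfund i) hγ (J_subset_D hJ i hx) hγx]
    exact one_mem _
  | succ k ih =>
    by_cases hγ' : γ ∈ Γ (i + 1)
    · exact ⟨i, le_rfl, (hnorm _).smul_set_subset_mul hγ' _⟩
    obtain ⟨v, hvD, hvΓ, hv1, hγv⟩ := exists_mem_D_succ_of_notMem hnorm hdec hfund hγ hγ'
    have hvJ : v • J i ⊆ J (i + 1) := Set.smul_set_subset_iff.mpr fun y hy =>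
      mul_mem_J_succ hnorm hdec hDmono hfund hcompat hJ hvD hvΓ hv1 hy
    have hγx' : γ * v⁻¹ * (v * x) ∈ D (i + 1 + k) := by
      rwa [mul_assoc, inv_mul_cancel_left, show i + 1 + k = i + (k + 1) by omega]
    obtain ⟨l, hil, hl⟩ := ih (i + 1) hγv (hvJ ⟨x, hx, rfl⟩) hγx'
    refine ⟨l, by omega, ?_⟩
    calc γ • J i = (γ * v⁻¹) • v • J i := by rw [smul_smul, inv_mul_cancel_right]
      _ ⊆ (γ * v⁻¹) • J (i + 1) := Set.smul_set_mono hvJ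
      _ ⊆ J l * (Γ (l + 1) : Set G) := hl

end Decomposition

theorem translate_J_subset_JGamma_general {G : Type*} [Group G]
    (Γ : ℕ → Subgroup G)
    (hnorm : ∀ n, (Γ n).Normal)
    (hdec : ∀ n, Γ (n + 1) ≤ Γ n)
    (D : ℕ → Finset G)
    (hDmono : ∀ n, D n ⊆ D (n + 1))
    (hfund : ∀ n, ∀ g : G, ∃! d, d ∈ D n ∧ g⁻¹ * d ∈ Γ n)
    (hcompat : ∀ i j, i < j →
      (D j : Set G) = ⋃ v ∈ (D j : Set G) ∩ (Γ i : Set G), v • (D i : Set G))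
    (J : ℕ → Set G)
    (hJ : ∀ n, J n = (D n : Set G) \ ⋃ i ∈ Finset.range n, J i * (Γ (i + 1) : Set G))
    (hGcov : ∀ g : G, ∃ n, g ∈ D n)
    :
    ∀ i : ℕ, 1 ≤ i → ∀ γ ∈ Γ i, ∃ l : ℕ, i ≤ l ∧ γ • J i ⊆ J l * (Γ (l + 1) : Set G) := by
  intro i _ γ hγ
  obtain hJi | ⟨x, hx⟩ := (J i).eq_empty_or_nonempty
  · exact ⟨i, le_rfl, by simp [hJi]⟩
  obtain ⟨N, hN⟩ := hGcov (γ * x)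
  exact exists_smul_J_subset_J_mul hnorm hdec hDmono hfund hcompat hJ N i hγ hx
    (monotone_nat_of_le_succ hDmono (Nat.le_add_left N i) hN)

/-- For every `i ≥ 1` and `γ ∈ Γ i`, there exists `l ≥ i` with `γ • J i ⊆ J l · Γ (l+1)`. -/
theorem translate_J_subset_JGamma {G : Type*} [Group G]
    (Γ : ℕ → Subgroup G)
    (hnorm : ∀ n, (Γ n).Normal)
    (hfin : ∀ n, (Γ n).FiniteIndex)
    (hdec : ∀ n, Γ (n + 1) ≤ Γ n)
    (D : ℕ → Finset G)
    (hD0 : D 0 = {1})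
    (hDone : ∀ n, (1 : G) ∈ D n)
    (hDmono : ∀ n, D n ⊆ D (n + 1))
    (hfund : ∀ n, ∀ g : G, ∃! d, d ∈ D n ∧ g⁻¹ * d ∈ Γ n)
    (hcompat : ∀ i j, i < j →
      (D j : Set G) = ⋃ v ∈ (D j : Set G) ∩ (Γ i : Set G), v • (D i : Set G))
    (J : ℕ → Set G)
    (hJ : ∀ n, J n = (D n : Set G) \ ⋃ i ∈ Finset.range n, J i * (Γ (i + 1) : Set G))
    (hGcov : ∀ g : G, ∃ n, g ∈ D n)
    (htriv : ∀ g : G, (∀ n, g ∈ Γ n) → g = 1)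
    :
    ∀ i : ℕ, 1 ≤ i → ∀ γ ∈ Γ i, ∃ l : ℕ, i ≤ l ∧ γ • J i ⊆ J l * (Γ (l + 1) : Set G) :=
  translate_J_subset_JGamma_general Γ hnorm hdec D hDmono hfund hcompat J hJ hGcov
end

section
/- For η as constructed (the irregular Toeplitz array of Section 4), for every k ≥ 1 and every γ ∈ Γ_k there is at most one g ∈ J(k) such that η(γg) = 1. -/
open Pointwise

/-- For the constructed Toeplitz array `η` (on each block `J s · Γ (s+1)` the value `1` occurs on at most one coset `d · Γ (s+1)`, `d ∈ J s`): for every `k ≥ 1` and `γ ∈ Γ k` there is at most one `g ∈ J k` with `η (γ g) = 1`. -/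
theorem at_most_one_one_in_translate {G : Type*} [Group G]
    (Γ : ℕ → Subgroup G)
    (hnorm : ∀ n, (Γ n).Normal)
    (hfin : ∀ n, (Γ n).FiniteIndex)
    (hdec : ∀ n, Γ (n + 1) ≤ Γ n)
    (D : ℕ → Finset G)
    (hD0 : D 0 = {1})
    (hDone : ∀ n, (1 : G) ∈ D n)
    (hDmono : ∀ n, D n ⊆ D (n + 1))
    (hfund : ∀ n, ∀ g : G, ∃! d, d ∈ D n ∧ g⁻¹ * d ∈ Γ n)
    (hcompat : ∀ i j, i < j →
      (D j : Set G) = ⋃ v ∈ (D j : Set G) ∩ (Γ i : Set G), v • (D i : Set G))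
    (J : ℕ → Set G)
    (hJ : ∀ n, J n = (D n : Set G) \ ⋃ i ∈ Finset.range n, J i * (Γ (i + 1) : Set G))
    (hGcov : ∀ g : G, ∃ n, g ∈ D n)
    (htriv : ∀ g : G, (∀ n, g ∈ Γ n) → g = 1)
    (η : G → Fin 2)
    (hconstr : ∀ s : ℕ, ∀ d₁ ∈ J s, ∀ d₂ ∈ J s, ∀ γ₁ ∈ Γ (s + 1), ∀ γ₂ ∈ Γ (s + 1),
      η (d₁ * γ₁) = 1 → η (d₂ * γ₂) = 1 → d₁ = d₂)
    :
    ∀ k : ℕ, 1 ≤ k → ∀ γ ∈ Γ k, ∀ g₁ ∈ J k, ∀ g₂ ∈ J k,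
      η (γ * g₁) = 1 → η (γ * g₂) = 1 → g₁ = g₂ := by
  intro k _hk γ hγ g₁ hg₁ g₂ hg₂ hη₁ hη₂
  classical
  -- the chain is decreasing
  have hle : ∀ {m n : ℕ}, m ≤ n → Γ n ≤ Γ m := by
    intro m n h
    induction h with
    | refl => exact le_rfl
    | step _ ih => exact (hdec _).trans ih
  -- uniqueness of fundamental-domain representatives
  have funiq : ∀ (n : ℕ) (d₁ d₂ : G), d₁ ∈ D n → d₂ ∈ D n → d₁⁻¹ * d₂ ∈ Γ n → d₁ = d₂ := by
    intro n d₁ d₂ h₁ h₂ h₃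
    obtain ⟨d, _, hun⟩ := hfund n d₁
    have e₁ := hun d₁ ⟨h₁, by rw [inv_mul_cancel]; exact (Γ n).one_mem⟩
    have e₂ := hun d₂ ⟨h₂, h₃⟩
    rw [e₁, e₂]
  -- conjugation stays in a normal subgroup
  have conjmem : ∀ (n : ℕ) (x g : G), x ∈ Γ n → g⁻¹ * x * g ∈ Γ n := by
    intro n x g hx
    simpa using (hnorm n).conj_mem x hx g⁻¹
  -- membership in a block
  have memJΓ : ∀ (j : ℕ) (x : G),
      x ∈ J j * (Γ (j + 1) : Set G) ↔ ∃ d ∈ J j, d⁻¹ * x ∈ Γ (j + 1) := by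
    intro j x
    constructor
    · rintro ⟨d, hd, c, hc, rfl⟩
      exact ⟨d, hd, by simpa using hc⟩
    · rintro ⟨d, hd, hc⟩
      exact ⟨d, hd, d⁻¹ * x, hc, by group⟩
  have memJΓ_congr : ∀ (j : ℕ) (x y : G), x⁻¹ * y ∈ Γ (j + 1) →
      (x ∈ J j * (Γ (j + 1) : Set G) ↔ y ∈ J j * (Γ (j + 1) : Set G)) := by
    intro j x y hxy
    rw [memJΓ, memJΓ]
    constructor
    · rintro ⟨d, hd, hdx⟩
      refine ⟨d, hd, ?_⟩
      have : d⁻¹ * y = (d⁻¹ * x) * (x⁻¹ * y) := by group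
      rw [this]; exact (Γ (j + 1)).mul_mem hdx hxy
    · rintro ⟨d, hd, hdy⟩
      refine ⟨d, hd, ?_⟩
      have : d⁻¹ * x = (d⁻¹ * y) * (x⁻¹ * y)⁻¹ := by group
      rw [this]; exact (Γ (j + 1)).mul_mem hdy ((Γ (j + 1)).inv_mem hxy)
  -- basic facts about J
  have hJsub : ∀ n, J n ⊆ (D n : Set G) := by
    intro n
    rw [hJ n]; exact Set.diff_subset
  have hJnot : ∀ (n : ℕ) (x : G), x ∈ J n → ∀ j < n, x ∉ J j * (Γ (j + 1) : Set G) := by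
    intro n x hx j hj hmem
    rw [hJ n] at hx
    exact hx.2 (Set.mem_biUnion (Finset.mem_range.mpr hj) hmem)
  have hJmem : ∀ (n : ℕ) (x : G), x ∈ (D n : Set G) →
      (∀ j < n, x ∉ J j * (Γ (j + 1) : Set G)) → x ∈ J n := by
    intro n x hx h
    rw [hJ n]
    refine ⟨hx, fun hmem => ?_⟩
    obtain ⟨i, hi, hxi⟩ := Set.mem_iUnion₂.mp hmem
    exact h i (Finset.mem_range.mp hi) hxi
  -- every element lies in some block
  have block_ex : ∀ x : G, ∃ i, x ∈ J i * (Γ (i + 1) : Set G) := by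
    intro x
    obtain ⟨m, hm⟩ := hGcov x
    by_cases h : ∃ i < m, x ∈ J i * (Γ (i + 1) : Set G)
    · obtain ⟨i, _, hi⟩ := h; exact ⟨i, hi⟩
    · push_neg at h
      refine ⟨m, (memJΓ m x).mpr ⟨x, hJmem m x hm h, ?_⟩⟩
      rw [inv_mul_cancel]; exact (Γ (m + 1)).one_mem
  -- canonical representatives of γ
  have hv' : ∀ n : ℕ, ∃ d, d ∈ D n ∧ γ⁻¹ * d ∈ Γ n := fun n => (hfund n γ).exists
  choose v hvD hvΓ using hv'
  have hvΓk : ∀ n, k ≤ n → v n ∈ Γ k := by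
    intro n hn
    have h1 : γ⁻¹ * v n ∈ Γ k := hle hn (hvΓ n)
    have : γ * (γ⁻¹ * v n) = v n := by group
    rw [← this]; exact (Γ k).mul_mem hγ h1
  have hvk : v k = 1 := by
    refine funiq k (v k) 1 (hvD k) (hDone k) ?_
    have : (v k)⁻¹ * 1 = (v k)⁻¹ := by group
    rw [this]; exact (Γ k).inv_mem (hvΓk k le_rfl)
  have hvcong : ∀ m n, m ≤ n → (v m)⁻¹ * v n ∈ Γ m := by
    intro m n hmn
    have h1 : (γ⁻¹ * v m)⁻¹ ∈ Γ m := (Γ m).inv_mem (hvΓ m)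
    have h2 : γ⁻¹ * v n ∈ Γ m := hle hmn (hvΓ n)
    have : (v m)⁻¹ * v n = (γ⁻¹ * v m)⁻¹ * (γ⁻¹ * v n) := by group
    rw [this]; exact (Γ m).mul_mem h1 h2
  have hcong : ∀ m n (g : G), m ≤ n → (v m * g)⁻¹ * (v n * g) ∈ Γ m := by
    intro m n g hmn
    have : (v m * g)⁻¹ * (v n * g) = g⁻¹ * ((v m)⁻¹ * v n) * g := by group
    rw [this]; exact conjmem m _ g (hvcong m n hmn)
  have hcongγ : ∀ n (g : G), (v n * g)⁻¹ * (γ * g) ∈ Γ n := by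
    intro n g
    have h1 : (γ⁻¹ * v n)⁻¹ ∈ Γ n := (Γ n).inv_mem (hvΓ n)
    have : (v n * g)⁻¹ * (γ * g) = g⁻¹ * (γ⁻¹ * v n)⁻¹ * g := by group
    rw [this]; exact conjmem n _ g h1
  -- representatives act on D k
  have hvDmul : ∀ n, k ≤ n → ∀ g : G, g ∈ D k → v n * g ∈ D n := by
    intro n hn g hg
    rcases eq_or_lt_of_le hn with h | h
    · subst h
      rw [hvk, one_mul]; exact hg
    · have hset : v n * g ∈ (D n : Set G) := by
        rw [hcompat k n h]
        refine Set.mem_biUnion ⟨Finset.mem_coe.mpr (hvD n), hvΓk n hn⟩ ?_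
        exact ⟨g, Finset.mem_coe.mpr hg, rfl⟩
      exact Finset.mem_coe.mp hset
  -- a block representative is the canonical one
  have rep_eq : ∀ (i : ℕ) (d e x : G), d ∈ J i → d⁻¹ * x ∈ Γ (i + 1) →
      e ∈ D (i + 1) → e⁻¹ * x ∈ Γ (i + 1) → d = e := by
    intro i d e x hd hdx he hex
    refine funiq (i + 1) d e (hDmono i (Finset.mem_coe.mp (hJsub i hd))) he ?_
    have : d⁻¹ * e = (d⁻¹ * x) * (e⁻¹ * x)⁻¹ := by group
    rw [this]; exact (Γ (i + 1)).mul_mem hdx ((Γ (i + 1)).inv_mem hex)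
  -- if v (i+1) * g lands in D i then v (i+1) = v i
  have step_eq : ∀ i, k ≤ i → ∀ g : G, g ∈ D k → v (i + 1) * g ∈ D i → v (i + 1) = v i := by
    intro i hi g hg hmem
    have h1 : v i * g ∈ D i := hvDmul i hi g hg
    have h2 : (v (i + 1) * g)⁻¹ * (v i * g) ∈ Γ i := by
      have h3 : ((v i)⁻¹ * v (i + 1))⁻¹ ∈ Γ i := (Γ i).inv_mem (hvcong i (i + 1) (Nat.le_succ i))
      have : (v (i + 1) * g)⁻¹ * (v i * g) = g⁻¹ * ((v i)⁻¹ * v (i + 1))⁻¹ * g := by group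
      rw [this]; exact conjmem i _ g h3
    exact mul_right_cancel (funiq i _ _ hmem h1 h2)
  -- any block containing γ * g with g ∈ J k has index ≥ k
  have block_ge : ∀ g, g ∈ J k → ∀ i, γ * g ∈ J i * (Γ (i + 1) : Set G) → k ≤ i := by
    intro g hg i hi
    by_contra h
    push_neg at h
    have hcls : (γ * g)⁻¹ * g ∈ Γ (i + 1) := by
      have h1 : γ⁻¹ ∈ Γ (i + 1) := hle h ((Γ k).inv_mem hγ)
      have : (γ * g)⁻¹ * g = g⁻¹ * γ⁻¹ * g := by group
      rw [this]; exact conjmem (i + 1) _ g h1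
    exact hJnot k g hg i h ((memJΓ_congr i (γ * g) g hcls).mp hi)
  -- the canonical representative of a block of γ * g
  have block_to_J : ∀ g, g ∈ D k → ∀ i, k ≤ i →
      γ * g ∈ J i * (Γ (i + 1) : Set G) → v (i + 1) * g ∈ J i := by
    intro g hg i hik hi
    obtain ⟨d, hd, hdx⟩ := (memJΓ i _).mp hi
    have he : v (i + 1) * g ∈ D (i + 1) := hvDmul (i + 1) (le_trans hik (Nat.le_succ i)) g hg
    have := rep_eq i d (v (i + 1) * g) (γ * g) hd hdx he (hcongγ (i + 1) g)
    rwa [this] at hd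
  -- membership of g₁, g₂ in D k
  have hg₁D : g₁ ∈ D k := Finset.mem_coe.mp (hJsub k hg₁)
  have hg₂D : g₂ ∈ D k := Finset.mem_coe.mp (hJsub k hg₂)
  -- get a block for γ * g₁, producing an element of the index set
  obtain ⟨l₁, hb₁⟩ := block_ex (γ * g₁)
  have hl₁k : k ≤ l₁ := block_ge g₁ hg₁ l₁ hb₁
  have hl₁S : k ≤ l₁ ∧ v (l₁ + 1) = v l₁ := by
    refine ⟨hl₁k, step_eq l₁ hl₁k g₁ hg₁D ?_⟩
    exact Finset.mem_coe.mp (hJsub l₁ (block_to_J g₁ hg₁D l₁ hl₁k hb₁))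
  -- the minimal stabilization index
  have hS : ∃ i, k ≤ i ∧ v (i + 1) = v i := ⟨l₁, hl₁S⟩
  set l := Nat.find hS with hl_def
  obtain ⟨hlk, hlv⟩ : k ≤ l ∧ v (l + 1) = v l := Nat.find_spec hS
  -- key: for every g ∈ J k, v (l+1) * g ∈ J l
  have min_block : ∀ g, g ∈ J k → v (l + 1) * g ∈ J l := by
    intro g hg
    have hgD : g ∈ D k := Finset.mem_coe.mp (hJsub k hg)
    apply hJmem l
    · rw [hlv]
      exact Finset.mem_coe.mpr (hvDmul l hlk g hgD)
    · intro j hj hmem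
      by_cases hjk : j < k
      · have hcls : (v (l + 1) * g)⁻¹ * g ∈ Γ (j + 1) := by
          have h1 : (v (l + 1))⁻¹ ∈ Γ (j + 1) := hle hjk ((Γ k).inv_mem (hvΓk (l + 1) (le_trans hlk (Nat.le_succ l))))
          have : (v (l + 1) * g)⁻¹ * g = g⁻¹ * (v (l + 1))⁻¹ * g := by group
          rw [this]; exact conjmem (j + 1) _ g h1
        exact hJnot k g hg j hjk ((memJΓ_congr j _ g hcls).mp hmem)
      · push_neg at hjk
        have hjl : j + 1 ≤ l + 1 := Nat.succ_le_succ (le_of_lt hj)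
        have hcls : (v (j + 1) * g)⁻¹ * (v (l + 1) * g) ∈ Γ (j + 1) := hcong (j + 1) (l + 1) g hjl
        have hmem' : v (j + 1) * g ∈ J j * (Γ (j + 1) : Set G) :=
          (memJΓ_congr j _ _ hcls).mpr hmem
        obtain ⟨d, hd, hdx⟩ := (memJΓ j _).mp hmem'
        have he : v (j + 1) * g ∈ D (j + 1) := hvDmul (j + 1) (le_trans hjk (Nat.le_succ j)) g hgD
        have hex : (v (j + 1) * g)⁻¹ * (v (j + 1) * g) ∈ Γ (j + 1) := by
          rw [inv_mul_cancel]; exact (Γ (j + 1)).one_mem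
        have hdej : d = v (j + 1) * g := rep_eq j d _ _ hd hdx he hex
        have hJj : v (j + 1) * g ∈ J j := hdej ▸ hd
        have hstep : v (j + 1) = v j :=
          step_eq j hjk g hgD (Finset.mem_coe.mp (hJsub j hJj))
        have : l ≤ j := Nat.find_min' hS ⟨hjk, hstep⟩
        omega
  -- uniqueness of the block index: every block of γ * g equals l
  have block_unique : ∀ g, g ∈ J k → ∀ i, γ * g ∈ J i * (Γ (i + 1) : Set G) → i = l := by
    intro g hg i hi
    have hgD : g ∈ D k := Finset.mem_coe.mp (hJsub k hg)
    have hik := block_ge g hg i hi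
    have hJi : v (i + 1) * g ∈ J i := block_to_J g hgD i hik hi
    rcases lt_or_ge l i with h | h
    · exfalso
      have hcls : (v (l + 1) * g)⁻¹ * (v (i + 1) * g) ∈ Γ (l + 1) :=
        hcong (l + 1) (i + 1) g (Nat.succ_le_succ (le_of_lt h))
      have hmem : v (l + 1) * g ∈ J l * (Γ (l + 1) : Set G) :=
        (memJΓ l _).mpr ⟨v (l + 1) * g, min_block g hg, by
          rw [inv_mul_cancel]; exact (Γ (l + 1)).one_mem⟩
      exact hJnot i _ hJi l h ((memJΓ_congr l _ _ hcls).mp hmem)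
    · have hstep : v (i + 1) = v i := step_eq i hik g hgD (Finset.mem_coe.mp (hJsub i hJi))
      have : l ≤ i := Nat.find_min' hS ⟨hik, hstep⟩
      omega
  -- now both γ * g₁ and γ * g₂ lie in block l
  obtain ⟨l₂, hb₂⟩ := block_ex (γ * g₂)
  have e₁ : l₁ = l := block_unique g₁ hg₁ l₁ hb₁
  have e₂ : l₂ = l := block_unique g₂ hg₂ l₂ hb₂
  rw [e₁] at hb₁; rw [e₂] at hb₂
  have hJ₁ : v (l + 1) * g₁ ∈ J l := min_block g₁ hg₁
  have hJ₂ : v (l + 1) * g₂ ∈ J l := min_block g₂ hg₂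
  have hγ₁ : (v (l + 1) * g₁)⁻¹ * (γ * g₁) ∈ Γ (l + 1) := hcongγ (l + 1) g₁
  have hγ₂ : (v (l + 1) * g₂)⁻¹ * (γ * g₂) ∈ Γ (l + 1) := hcongγ (l + 1) g₂
  have hrw₁ : (v (l + 1) * g₁) * ((v (l + 1) * g₁)⁻¹ * (γ * g₁)) = γ * g₁ := by group
  have hrw₂ : (v (l + 1) * g₂) * ((v (l + 1) * g₂)⁻¹ * (γ * g₂)) = γ * g₂ := by group
  have hd := hconstr l (v (l + 1) * g₁) hJ₁ (v (l + 1) * g₂) hJ₂ _ hγ₁ _ hγ₂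
    (by rw [hrw₁]; exact hη₁) (by rw [hrw₂]; exact hη₂)
  exact mul_left_cancel hd
end

section
/- For the Toeplitz array η constructed in Section 4 (with the series L = 1/|D_1| + ∑_j |D_j|/|D_{j+1}| convergent and 1 - e^{-2L} < 1/4), the density d = lim_n |D_n ∩ Per(η,Γ_n)|/|D_n| satisfies d ≤ 1 - e^{-2L} < 1/4, and in particular d < 1 - d and η is irregular (d < 1). -/
open Pointwise Filter Topology

/-! Every position of `D n` at which `η` is already `Γ n`-periodic lies in `J i * Γ (i + 1)` for
some `i < n`: otherwise it would belong to `J n`, which avoids `Per η (Γ n)`. Since `D n` is tiled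
by `Γ (i + 1)`-translates of `D (i + 1)` and `J i ⊆ D i ⊆ D (i + 1)`, the set `J i * Γ (i + 1)`
fills exactly the fraction `|D (i + 1) ∩ J i| / |D (i + 1)| ≤ |D i| / |D (i + 1)|` of `D n`.
Summing over `i`, every density along the sequence is at most `L`, and `L ≤ 1 - exp (-2L)` once
`exp (-2L) ≥ 1/2`. -/

open Finset

theorem card_filter_le_sum_card_filter {α : Type*} {s : Finset α} {P : Set α} {U : ℕ → Set α}
    {n : ℕ} [DecidablePred (· ∈ P)] [∀ i, DecidablePred (· ∈ U i)]
    (hdisj : Disjoint ((s : Set α) \ ⋃ i ∈ range n, U i) P) :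
    #(s.filter (· ∈ P)) ≤ ∑ i ∈ range n, #(s.filter (· ∈ U i)) := by
  classical
  refine (card_le_card fun g hg => ?_).trans card_biUnion_le
  obtain ⟨hgs, hgP⟩ := mem_filter.mp hg
  by_contra hnot
  refine Set.disjoint_left.mp hdisj ⟨hgs, fun hU => hnot ?_⟩ hgP
  obtain ⟨i, hi, hgU⟩ := Set.mem_iUnion₂.mp hU
  exact mem_biUnion.mpr ⟨i, hi, mem_filter.mpr ⟨hgs, hgU⟩⟩

section Cosets

variable {G : Type*} [Group G] {Γ : Subgroup G}

theorem injOn_mk_of_existsUnique {D : Set G} (h : ∀ g : G, ∃! d, d ∈ D ∧ g⁻¹ * d ∈ Γ) :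
    Set.InjOn ((↑) : G → G ⧸ Γ) D := by
  intro x hx y hy hxy
  obtain ⟨_, -, hunique⟩ := h x
  exact (hunique x ⟨hx, by simp [Γ.one_mem]⟩).trans
    (hunique y ⟨hy, QuotientGroup.eq.mp hxy⟩).symm

variable [Γ.Normal]

theorem mk_mul_of_mem_left {v : G} (hv : v ∈ Γ) (g : G) : ((v * g : G) : G ⧸ Γ) = g := by
  rw [QuotientGroup.mk_mul, (QuotientGroup.eq_one_iff v).mpr hv, one_mul]

theorem injOn_mul_of_subset_of_injOn_mk {W E : Set G} (hW : W ⊆ Γ)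
    (hE : Set.InjOn ((↑) : G → G ⧸ Γ) E) :
    (W ×ˢ E).InjOn fun p : G × G => p.1 * p.2 := by
  rintro ⟨v, e⟩ ⟨hv, he⟩ ⟨v', e'⟩ ⟨hv', he'⟩ (h : v * e = v' * e')
  have hee' : e = e' := hE he he' <| by
    rw [← mk_mul_of_mem_left (hW hv) e, h, mk_mul_of_mem_left (hW hv') e']
  subst hee'
  rw [mul_right_cancel h]

theorem mul_mem_mul_subgroup_iff {E T : Set G} (hE : Set.InjOn ((↑) : G → G ⧸ Γ) E)
    (hT : T ⊆ E) {v e : G} (hv : v ∈ Γ) (he : e ∈ E) :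
    v * e ∈ T * (Γ : Set G) ↔ e ∈ T := by
  rw [← QuotientGroup.preimage_image_mk_eq_mul, Set.mem_preimage, mk_mul_of_mem_left hv]
  exact ⟨fun ⟨t, ht, hte⟩ => hE (hT ht) he hte ▸ ht, fun he => ⟨e, he, rfl⟩⟩

variable [DecidableEq G]

theorem card_filter_mem_mul_mul_card {W E : Finset G} (hW : (W : Set G) ⊆ Γ)
    (hE : Set.InjOn ((↑) : G → G ⧸ Γ) E) (T : Set G) (hT : T ⊆ E) [DecidablePred (· ∈ T)]
    [DecidablePred (· ∈ T * (Γ : Set G))] :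
    #((W * E).filter (· ∈ T * (Γ : Set G))) * #E = #(E.filter (· ∈ T)) * #(W * E) := by
  have hfilter : (W * E).filter (· ∈ T * (Γ : Set G)) = W * E.filter (· ∈ T) := by
    ext g
    simp only [mem_filter, Finset.mem_mul]
    constructor
    · rintro ⟨⟨v, hv, e, he, rfl⟩, hve⟩
      exact ⟨v, hv, e, ⟨he, (mul_mem_mul_subgroup_iff hE hT (hW hv) he).mp hve⟩, rfl⟩
    · rintro ⟨v, hv, e, ⟨he, heT⟩, rfl⟩
      exact ⟨⟨v, hv, e, he, rfl⟩, (mul_mem_mul_subgroup_iff hE hT (hW hv) he).mpr heT⟩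
  have hinj := injOn_mul_of_subset_of_injOn_mk hW hE
  rw [hfilter, card_mul_iff.mpr hinj,
    card_mul_iff.mpr (hinj.mono (Set.prod_mono le_rfl (coe_subset.mpr (filter_subset _ _))))]
  ring

end Cosets

section Tower

variable {G : Type*} [Group G] [DecidableEq G] {Γ : ℕ → Subgroup G} {D : ℕ → Finset G}

theorem exists_subset_subgroup_mul_eq
    (hcompat : ∀ i j, i < j →
      (D j : Set G) = ⋃ v ∈ (D j : Set G) ∩ (Γ i : Set G), v • (D i : Set G))
    {m n : ℕ} (hmn : m ≤ n) : ∃ W : Finset G, (W : Set G) ⊆ Γ m ∧ W * D m = D n := by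
  classical
  rcases hmn.eq_or_lt with rfl | hlt
  · exact ⟨1, by simp [Γ m |>.one_mem], one_mul _⟩
  · refine ⟨(D n).filter (· ∈ Γ m), fun v hv => (mem_filter.mp hv).2, coe_injective ?_⟩
    rw [coe_mul, coe_filter, hcompat m n hlt, Set.iUnion_smul_set, smul_eq_mul]
    rfl

theorem card_filter_mem_mul_subgroup_mul_card {m n : ℕ} [(Γ m).Normal]
    (hinj : Set.InjOn ((↑) : G → G ⧸ Γ m) (D m))
    (hcompat : ∀ i j, i < j →
      (D j : Set G) = ⋃ v ∈ (D j : Set G) ∩ (Γ i : Set G), v • (D i : Set G))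
    (hmn : m ≤ n) (T : Set G) (hT : T ⊆ D m) [DecidablePred (· ∈ T)]
    [DecidablePred (· ∈ T * (Γ m : Set G))] :
    #((D n).filter (· ∈ T * (Γ m : Set G))) * #(D m) = #((D m).filter (· ∈ T)) * #(D n) := by
  obtain ⟨W, hW, hWD⟩ := exists_subset_subgroup_mul_eq hcompat hmn
  rw [← hWD]
  exact card_filter_mem_mul_mul_card hW hinj T hT

theorem card_inter_div_card_le_sum [∀ n, (Γ n).Normal]
    (hinj : ∀ n, Set.InjOn ((↑) : G → G ⧸ Γ n) (D n)) (hne : ∀ n, (D n).Nonempty)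
    (hmono : ∀ n, D n ⊆ D (n + 1))
    (hcompat : ∀ i j, i < j →
      (D j : Set G) = ⋃ v ∈ (D j : Set G) ∩ (Γ i : Set G), v • (D i : Set G))
    {J : ℕ → Set G} (hJ : ∀ n, J n = (D n : Set G) \ ⋃ i ∈ range n, J i * (Γ (i + 1) : Set G))
    (n : ℕ) {P : Set G} (hP : Disjoint (J n) P) :
    (Nat.card ((D n : Set G) ∩ P : Set G) : ℝ) / #(D n) ≤
      ∑ i ∈ range n, (#(D i) : ℝ) / #(D (i + 1)) := by
  classical
  have hpos : ∀ k, (0 : ℝ) < #(D k) := fun k => by exact_mod_cast (hne k).card_pos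
  have hcard : Nat.card ((D n : Set G) ∩ P : Set G) = #((D n).filter (· ∈ P)) := by
    rw [← Set.ncard_coe_finset, coe_filter, Nat.card_coe_set_eq]
    rfl
  have hcover : #((D n).filter (· ∈ P)) ≤
      ∑ i ∈ range n, #((D n).filter (· ∈ J i * (Γ (i + 1) : Set G))) :=
    card_filter_le_sum_card_filter (by rwa [← hJ n])
  have hterm : ∀ i ∈ range n, (#((D n).filter (· ∈ J i * (Γ (i + 1) : Set G))) : ℝ) / #(D n) ≤
      #(D i) / #(D (i + 1)) := by
    intro i hi
    have hJD : J i ⊆ D i := (hJ i).trans_subset Set.sdiff_subset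
    have hfilter : (D (i + 1)).filter (· ∈ J i) ⊆ D i := fun g hg => hJD (mem_filter.mp hg).2
    rw [div_le_div_iff₀ (hpos n) (hpos (i + 1))]
    exact_mod_cast (card_filter_mem_mul_subgroup_mul_card (hinj (i + 1)) hcompat (mem_range.mp hi)
      (J i) (hJD.trans (coe_subset.mpr (hmono i)))).trans_le
      (Nat.mul_le_mul_right _ (card_le_card hfilter))
  calc (Nat.card ((D n : Set G) ∩ P : Set G) : ℝ) / #(D n)
      ≤ (∑ i ∈ range n, (#((D n).filter (· ∈ J i * (Γ (i + 1) : Set G))) : ℝ)) / #(D n) := by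
        rw [hcard]
        exact div_le_div_of_nonneg_right (by exact_mod_cast hcover) (hpos n).le
    _ = ∑ i ∈ range n, (#((D n).filter (· ∈ J i * (Γ (i + 1) : Set G))) : ℝ) / #(D n) :=
        sum_div _ _ _
    _ ≤ ∑ i ∈ range n, (#(D i) : ℝ) / #(D (i + 1)) := sum_le_sum hterm

end Tower

theorem le_one_sub_exp_neg_two_mul {L : ℝ} (h0 : 0 ≤ L)
    (h : 1 - Real.exp (-(2 * L)) ≤ 1 / 2) : L ≤ 1 - Real.exp (-(2 * L)) := by
  have hmul : Real.exp (-(2 * L)) * (1 + 2 * L) ≤ 1 := by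
    calc Real.exp (-(2 * L)) * (1 + 2 * L) ≤ Real.exp (-(2 * L)) * Real.exp (2 * L) := by
          gcongr
          linarith [Real.add_one_le_exp (2 * L)]
      _ = 1 := by rw [← Real.exp_add, neg_add_cancel, Real.exp_zero]
  -- with `x = exp (-2L)`: `x ≤ 1 - 2 L x ≤ 1 - L`, as `x ≥ 1/2`
  nlinarith

theorem irregular_density_bound_general {G : Type*} [Group G]
    (Γ : ℕ → Subgroup G)
    (hnorm : ∀ n, (Γ n).Normal)
    (D : ℕ → Finset G)
    (hD0 : D 0 = {1})
    (hDone : ∀ n, (1 : G) ∈ D n)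
    (hDmono : ∀ n, D n ⊆ D (n + 1))
    (hfund : ∀ n, ∀ g : G, ∃! d, d ∈ D n ∧ g⁻¹ * d ∈ Γ n)
    (hcompat : ∀ i j, i < j →
      (D j : Set G) = ⋃ v ∈ (D j : Set G) ∩ (Γ i : Set G), v • (D i : Set G))
    (J : ℕ → Set G)
    (hJ : ∀ n, J n = (D n : Set G) \ ⋃ i ∈ Finset.range n, J i * (Γ (i + 1) : Set G))
    (η : G → Fin 2)
    (hJper : ∀ n : ℕ, J n ⊆ Per η (Γ (n + 1)) \ Per η (Γ n))
    (S L : ℝ)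
    (hS : HasSum (fun j : ℕ => ((D (j + 1)).card : ℝ) / ((D (j + 2)).card : ℝ)) S)
    (hL : L = 1 / ((D 1).card : ℝ) + S)
    (hsmall : 1 - Real.exp (-(2 * L)) < 1 / 4)
    (d : ℝ)
    (hd : Tendsto
      (fun n => (Nat.card ((D n : Set G) ∩ Per η (Γ n) : Set G) : ℝ) / ((D n).card : ℝ))
      atTop (𝓝 d)) :
    d ≤ 1 - Real.exp (-(2 * L)) ∧ d < 1 - d ∧ d < 1 := by
  classical
  have := hnorm
  have hinj n : Set.InjOn ((↑) : G → G ⧸ Γ n) (D n) := injOn_mk_of_existsUnique (hfund n)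
  have hsum : HasSum (fun i => (#(D i) : ℝ) / #(D (i + 1))) L := by
    convert hS.zero_add (f := fun i => (#(D i) : ℝ) / #(D (i + 1))) using 1
    simp [hL, hD0]
  have hdensity n := card_inter_div_card_le_sum hinj (fun k => ⟨1, hDone k⟩)
    hDmono hcompat hJ n (Set.disjoint_left.mpr fun _ hg => (hJper n hg).2)
  have hnonneg i : 0 ≤ (#(D i) : ℝ) / #(D (i + 1)) :=
    div_nonneg (Nat.cast_nonneg _) (Nat.cast_nonneg _)
  have hpartial n : ∑ i ∈ range n, (#(D i) : ℝ) / #(D (i + 1)) ≤ L :=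
    sum_le_hasSum _ (fun i _ => hnonneg i) hsum
  have hdL : d ≤ L := le_of_tendsto' hd fun n => (hdensity n).trans (hpartial n)
  have hbound : d ≤ 1 - Real.exp (-(2 * L)) :=
    hdL.trans (le_one_sub_exp_neg_two_mul (hsum.nonneg hnonneg) (by linarith))
  exact ⟨hbound, by linarith, by linarith⟩

/-- For the Toeplitz array `η` of Section 4, with
`L = 1/|D 1| + ∑_{j≥1} |D j|/|D (j+1)|` convergent and `1 - exp (-2L) < 1/4`, the density
`d = lim |D n ∩ Per(η,Γ n)|/|D n|` satisfies `d ≤ 1 - exp (-2L) < 1/4`; in particular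
`d < 1 - d` and `η` is irregular (`d < 1`). -/
theorem irregular_density_bound {G : Type*} [Group G]
    (Γ : ℕ → Subgroup G)
    (hnorm : ∀ n, (Γ n).Normal)
    (hfin : ∀ n, (Γ n).FiniteIndex)
    (hdec : ∀ n, Γ (n + 1) ≤ Γ n)
    (D : ℕ → Finset G)
    (hD0 : D 0 = {1})
    (hDone : ∀ n, (1 : G) ∈ D n)
    (hDmono : ∀ n, D n ⊆ D (n + 1))
    (hfund : ∀ n, ∀ g : G, ∃! d, d ∈ D n ∧ g⁻¹ * d ∈ Γ n)
    (hcompat : ∀ i j, i < j →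
      (D j : Set G) = ⋃ v ∈ (D j : Set G) ∩ (Γ i : Set G), v • (D i : Set G))
    (J : ℕ → Set G)
    (hJ : ∀ n, J n = (D n : Set G) \ ⋃ i ∈ Finset.range n, J i * (Γ (i + 1) : Set G))
    (η : G → Fin 2)
    (hToe : ∀ g : G, ∃ n, g ∈ Per η (Γ n))
    (hJper : ∀ n : ℕ, J n ⊆ Per η (Γ (n + 1)) \ Per η (Γ n))
    (S L : ℝ)
    (hS : HasSum (fun j : ℕ => ((D (j + 1)).card : ℝ) / ((D (j + 2)).card : ℝ)) S)
    (hL : L = 1 / ((D 1).card : ℝ) + S)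
    (hsmall : 1 - Real.exp (-(2 * L)) < 1 / 4)
    (d : ℝ)
    (hd : Tendsto
      (fun n => (Nat.card ((D n : Set G) ∩ Per η (Γ n) : Set G) : ℝ) / ((D n).card : ℝ))
      atTop (𝓝 d)) :
    d ≤ 1 - Real.exp (-(2 * L)) ∧ d < 1 - d ∧ d < 1 :=
  irregular_density_bound_general Γ hnorm D hD0 hDone hDmono hfund hcompat J hJ η hJper S L hS hL
    hsmall d hd
end

section
/- Under the setup of the decomposition lemma with J(n) as defined, the sets {J(i)Γ_{i+1}}_{i≥0} are pairwise disjoint, and D_n is the disjoint union of (D_n ∩ J(i)Γ_{i+1}) for i = 0,…,n. -/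
open Pointwise

/-- The sets `J i · Γ (i+1)` are pairwise disjoint, and `D n` is the
disjoint union of the pieces `D n ∩ J i · Γ (i+1)` for `i = 0, …, n`. -/
theorem JGamma_pairwise_disjoint {G : Type*} [Group G]
    (Γ : ℕ → Subgroup G)
    (hnorm : ∀ n, (Γ n).Normal)
    (hfin : ∀ n, (Γ n).FiniteIndex)
    (hdec : ∀ n, Γ (n + 1) ≤ Γ n)
    (D : ℕ → Finset G)
    (hD0 : D 0 = {1})
    (hDone : ∀ n, (1 : G) ∈ D n)
    (hDmono : ∀ n, D n ⊆ D (n + 1))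
    (hfund : ∀ n, ∀ g : G, ∃! d, d ∈ D n ∧ g⁻¹ * d ∈ Γ n)
    (hcompat : ∀ i j, i < j →
      (D j : Set G) = ⋃ v ∈ (D j : Set G) ∩ (Γ i : Set G), v • (D i : Set G))
    (J : ℕ → Set G)
    (hJ : ∀ n, J n = (D n : Set G) \ ⋃ i ∈ Finset.range n, J i * (Γ (i + 1) : Set G)) :
    (∀ i k : ℕ, i ≠ k →
        Disjoint (J i * (Γ (i + 1) : Set G)) (J k * (Γ (k + 1) : Set G))) ∧
      ∀ n : ℕ, (D n : Set G) =
        ⋃ i ∈ Finset.range (n + 1), (D n : Set G) ∩ (J i * (Γ (i + 1) : Set G)) := by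
  have hmono : ∀ i k : ℕ, i ≤ k → Γ k ≤ Γ i := fun i k h => antitone_nat_of_succ_le hdec h
  have key : ∀ i k : ℕ, i < k →
      Disjoint (J i * (Γ (i + 1) : Set G)) (J k * (Γ (k + 1) : Set G)) := by
    intro i k hik
    rw [Set.disjoint_left]
    rintro x ⟨a, ha, γ, hγ, rfl⟩ ⟨b, hb, δ, hδ, hx⟩
    have hδ' : δ ∈ Γ (i + 1) := hmono (i + 1) (k + 1) (by omega) hδ
    have hb' : b ∈ J i * (Γ (i + 1) : Set G) := by
      refine ⟨a, ha, γ * δ⁻¹, mul_mem hγ (inv_mem hδ'), ?_⟩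
      have hx' : b * δ = a * γ := hx
      have : b = a * γ * δ⁻¹ := by
        rw [← hx']; group
      rw [this, mul_assoc]
    have hbk : b ∈ (D k : Set G) \ ⋃ j ∈ Finset.range k, J j * (Γ (j + 1) : Set G) := by
      rw [← hJ k]; exact hb
    exact hbk.2 (Set.mem_biUnion (Finset.mem_range.mpr hik) hb')
  refine ⟨fun i k hik => ?_, fun n => ?_⟩
  · rcases lt_or_gt_of_ne hik with h | h
    · exact key i k h
    · exact (key k i h).symm
  · ext g
    simp only [Set.mem_iUnion, Set.mem_inter_iff, exists_prop]
    constructor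
    · intro hg
      by_cases hgJ : g ∈ ⋃ i ∈ Finset.range n, J i * (Γ (i + 1) : Set G)
      · obtain ⟨i, hi, hmem⟩ := Set.mem_iUnion₂.mp hgJ
        exact ⟨i, Finset.mem_range.mpr (Nat.lt_succ_of_lt (Finset.mem_range.mp hi)), hg, hmem⟩
      · have hgn : g ∈ J n := by rw [hJ n]; exact ⟨hg, hgJ⟩
        exact ⟨n, Finset.self_mem_range_succ n, hg,
          ⟨g, hgn, 1, one_mem _, mul_one g⟩⟩
    · rintro ⟨i, _, hg, _⟩; exact hg
end

section
/- Let π: X → Y be a factor map between topological dynamical systems (X,σ,G) and (Y,φ,G), with (Y,φ,G) minimal and uniquely ergodic with invariant measure ν. Suppose A ⊆ X is a G-invariant Borel set such that π restricted to A is injective and μ'(A) = 1 for every μ' ∈ M_G(X). Then (X,σ,G) is uniquely ergodic. -/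
open MeasureTheory

/-- Let `π : X → Y` be a factor map of topological `G`-systems on compact
metrizable spaces, with `(Y,φ)` minimal and uniquely ergodic with invariant measure `ν`.
If `A ⊆ X` is a `G`-invariant Borel set on which `π` is injective and which has full
measure for every invariant Borel probability measure on `X`, then `(X,σ)` is uniquely
ergodic. -/
theorem uniquely_ergodic_of_injective_full_measure
    {G X Y : Type*} [Group G] [Countable G]
    [TopologicalSpace X] [CompactSpace X] [TopologicalSpace.MetrizableSpace X]
    [MeasurableSpace X] [BorelSpace X]
    [TopologicalSpace Y] [CompactSpace Y] [TopologicalSpace.MetrizableSpace Y]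
    [MeasurableSpace Y] [BorelSpace Y]
    (σ : G → X → X) (φ : G → Y → Y)
    (hσcont : ∀ g, Continuous (σ g)) (hφcont : ∀ g, Continuous (φ g))
    (hσ1 : ∀ x, σ 1 x = x) (hσmul : ∀ g h x, σ (g * h) x = σ g (σ h x))
    (hφ1 : ∀ y, φ 1 y = y) (hφmul : ∀ g h y, φ (g * h) y = φ g (φ h y))
    (π : X → Y)
    (hπcont : Continuous π) (hπsurj : Function.Surjective π)
    (hπequiv : ∀ g x, π (σ g x) = φ g (π x))
    (hmin : ∀ y : Y, Dense (Set.range fun g : G => φ g y))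
    (ν : Measure Y) [IsProbabilityMeasure ν]
    (hνinv : ∀ g : G, Measure.map (φ g) ν = ν)
    (hνunique : ∀ ν' : Measure Y, IsProbabilityMeasure ν' →
      (∀ g : G, Measure.map (φ g) ν' = ν') → ν' = ν)
    (A : Set X) (hAmeas : MeasurableSet A)
    (hAinv : ∀ g : G, σ g ⁻¹' A = A)
    (hAinj : Set.InjOn π A)
    (hAfull : ∀ μ' : Measure X, IsProbabilityMeasure μ' →
      (∀ g : G, Measure.map (σ g) μ' = μ') → μ' A = 1) :
    ∀ μ₁ μ₂ : Measure X, IsProbabilityMeasure μ₁ → IsProbabilityMeasure μ₂ →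
      (∀ g : G, Measure.map (σ g) μ₁ = μ₁) → (∀ g : G, Measure.map (σ g) μ₂ = μ₂) →
      μ₁ = μ₂ := by
  letI : MetricSpace X := TopologicalSpace.metrizableSpaceMetric X
  haveI : PolishSpace X := inferInstance
  have hπmeas : Measurable π := hπcont.measurable
  intro μ₁ μ₂ h₁ h₂ hi₁ hi₂
  have key : ∀ (μ : Measure X), IsProbabilityMeasure μ →
      (∀ g, Measure.map (σ g) μ = μ) →
      ∀ B : Set X, MeasurableSet B → μ B = ν (π '' (B ∩ A)) := by
    intro μ hp hinv B hB
    have hA1 : μ A = 1 := hAfull μ hp hinv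
    have hAc : μ Aᶜ = 0 := by
      have := measure_compl hAmeas (measure_ne_top μ A)
      rw [hA1] at this
      simpa using this
    haveI : IsProbabilityMeasure (Measure.map π μ) :=
      Measure.isProbabilityMeasure_map hπmeas.aemeasurable
    have hmap : Measure.map π μ = ν := by
      refine hνunique _ inferInstance ?_
      intro g
      rw [Measure.map_map (hφcont g).measurable hπmeas]
      have hcomp : (φ g) ∘ π = π ∘ (σ g) := by
        funext x; exact (hπequiv g x).symm
      rw [hcomp, ← Measure.map_map hπmeas (hσcont g).measurable, hinv g]
    set C : Set Y := π '' (B ∩ A) with hCdef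
    have hC : MeasurableSet C :=
      (hB.inter hAmeas).image_of_continuousOn_injOn hπcont.continuousOn
        (hAinj.mono Set.inter_subset_right)
    have h1 : B ∩ A = A ∩ π ⁻¹' C := by
      ext x
      constructor
      · intro hx
        exact ⟨hx.2, Set.mem_image_of_mem π hx⟩
      · rintro ⟨hxA, z, hz, hzx⟩
        have : z = x := hAinj hz.2 hxA hzx
        exact this ▸ hz
    have e1 : μ B = μ (B ∩ A) := by
      refine le_antisymm ?_ (measure_mono Set.inter_subset_left)
      calc μ B ≤ μ (B ∩ A) + μ Aᶜ :=
            measure_mono (fun x hx => by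
              by_cases hxA : x ∈ A
              · exact Or.inl ⟨hx, hxA⟩
              · exact Or.inr hxA) |>.trans (measure_union_le _ _)
        _ = μ (B ∩ A) := by rw [hAc, add_zero]
    have e2 : μ (A ∩ π ⁻¹' C) = μ (π ⁻¹' C) := by
      refine le_antisymm (measure_mono Set.inter_subset_right) ?_
      calc μ (π ⁻¹' C)
          ≤ μ (A ∩ π ⁻¹' C) + μ Aᶜ :=
            measure_mono (fun x hx => by
              by_cases hxA : x ∈ A
              · exact Or.inl ⟨hxA, hx⟩
              · exact Or.inr hxA) |>.trans (measure_union_le _ _)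
        _ = μ (A ∩ π ⁻¹' C) := by rw [hAc, add_zero]
    rw [e1, h1, e2, ← hmap, Measure.map_apply hπmeas hC]
  ext s hs
  rw [key μ₁ h₁ hi₁ s hs, key μ₂ h₂ hi₂ s hs]
end
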